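/- arXiv:1506.02342 — 13 statements merged into one kernel-verified Lean document; each statement's English description precedes it below -/
import Mathlib

section
/- The invariant density integrates to one: ∫₀^N p_σ^s(x) dx = 1. Equivalently, ∫₀^N N³ x^{c₀(R₀ˢ−1)−1} (N−x)^{−(c₀(R₀ˢ−1)+3)} exp(−c₀ x/(N−x)) dx = c₀^{−c₀(R₀ˢ−1)} [(R₀ˢ)² + c₀⁻¹(R₀ˢ−1)] Γ(c₀(R₀ˢ−1)). -/
open Real MeasureTheory Filter Set Topology

/-!
The substitution `x = N y / (1 + y)`, i.e. `y = x / (N - x)`, maps `(0, ∞)` onto `(0, N)` and turns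
`N³ x^(a-1) (N-x)^(-(a+3)) exp(-c x/(N-x)) dx`, with `a = c₀(R₀ˢ-1)` and `c = c₀`, into
`y^(a-1) (1+y)² exp(-c y) dy`. Up to the factor `c^(-a) Γ(a)` this is `E[(1+Y)²]` for
`Y ~ Gamma(a, c)`, which has mean `a/c` and variance `a/c²`; hence the integral is
`c^(-a) Γ(a) ((1 + a/c)² + a/c²) = c^(-a) Γ(a) ((R₀ˢ)² + c⁻¹(R₀ˢ-1))`.
-/

theorem image_mul_div_one_add_Ioi {N : ℝ} (hN : 0 < N) :
    (fun y => N * y / (1 + y)) '' Ioi 0 = Ioo 0 N := by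
  ext x
  constructor
  · rintro ⟨y, hy, rfl⟩
    have hy : 0 < y := hy
    exact ⟨by positivity, by rw [div_lt_iff₀ (by positivity)]; linarith⟩
  · rintro ⟨hx, hxN⟩
    have hNx : 0 < N - x := by linarith
    exact ⟨x / (N - x), div_pos hx hNx, by field_simp; ring⟩

theorem injOn_mul_div_one_add_Ioi {N : ℝ} (hN : N ≠ 0) :
    InjOn (fun y => N * y / (1 + y)) (Ioi 0) := by
  intro y₁ hy₁ y₂ hy₂ h
  have hy₁ : 0 < y₁ := hy₁
  have hy₂ : 0 < y₂ := hy₂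
  field_simp at h
  linarith

theorem hasDerivAt_mul_div_one_add (N : ℝ) {y : ℝ} (hy : 1 + y ≠ 0) :
    HasDerivAt (fun y => N * y / (1 + y)) (N / (1 + y) ^ 2) y := by
  refine (((hasDerivAt_id y).const_mul N).div ((hasDerivAt_id y).const_add 1) hy).congr_deriv ?_
  simp only [id]
  ring

theorem integral_Ioo_eq_integral_Ioi_mul_div_one_add {E : Type*} [NormedAddCommGroup E]
    [NormedSpace ℝ E] {N : ℝ} (hN : 0 < N) (f : ℝ → E) :
    ∫ x in Ioo 0 N, f x = ∫ y in Ioi 0, (N / (1 + y) ^ 2) • f (N * y / (1 + y)) := by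
  have hderiv : ∀ y ∈ Ioi (0 : ℝ),
      HasDerivWithinAt (fun y => N * y / (1 + y)) (N / (1 + y) ^ 2) (Ioi 0) y :=
    fun y (hy : 0 < y) => (hasDerivAt_mul_div_one_add N (by positivity)).hasDerivWithinAt
  rw [← image_mul_div_one_add_Ioi hN, integral_image_eq_integral_abs_deriv_smul measurableSet_Ioi
    hderiv (injOn_mul_div_one_add_Ioi hN.ne')]
  refine setIntegral_congr_fun measurableSet_Ioi fun y (hy : 0 < y) => ?_
  rw [abs_of_pos (by positivity)]

noncomputable def sisDensityKernel (N a c x : ℝ) : ℝ :=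
  N ^ 3 * x ^ (a - 1) * (N - x) ^ (-(a + 3)) * exp (-c * x / (N - x))

theorem mul_sisDensityKernel_mul_div_one_add {N y : ℝ} (hN : 0 < N) (hy : 0 < y) (a c : ℝ) :
    N / (1 + y) ^ 2 * sisDensityKernel N a c (N * y / (1 + y)) =
      y ^ (a - 1) * (1 + y) ^ 2 * exp (-(c * y)) := by
  set u := N / (1 + y) with hu
  have hu0 : 0 < u := by positivity
  have hx : N * y / (1 + y) = u * y := by rw [hu]; ring
  have hNx : N - u * y = u := by rw [hu]; field_simp; ring
  have hpow : u ^ (a - 1) * u ^ (-(a + 3)) = (u ^ 4)⁻¹ := by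
    rw [← rpow_add hu0, show a - 1 + -(a + 3) = -((4 : ℕ) : ℝ) by push_cast; ring,
      rpow_neg hu0.le, rpow_natCast]
  have hexp : -c * (u * y) / u = -(c * y) := by field_simp
  rw [sisDensityKernel, hx, hNx, hexp, mul_rpow hu0.le hy.le]
  calc N / (1 + y) ^ 2 * (N ^ 3 * (u ^ (a - 1) * y ^ (a - 1)) * u ^ (-(a + 3)) * exp (-(c * y)))
      = N / (1 + y) ^ 2 * N ^ 3 * (u ^ (a - 1) * u ^ (-(a + 3))) * y ^ (a - 1) *
          exp (-(c * y)) := by ring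
    _ = y ^ (a - 1) * (1 + y) ^ 2 * exp (-(c * y)) := by rw [hpow, hu]; field_simp

theorem integral_rpow_mul_one_add_sq_mul_exp_neg_mul_Ioi {a c : ℝ} (ha : 0 < a) (hc : 0 < c) :
    ∫ y in Ioi 0, y ^ (a - 1) * (1 + y) ^ 2 * exp (-(c * y)) =
      c ^ (-a) * ((1 + a / c) ^ 2 + a / c ^ 2) * Gamma a := by
  have hint : ∀ s : ℝ, 0 < s → IntegrableOn (fun y => y ^ (s - 1) * exp (-(c * y))) (Ioi 0) :=
    fun s hs => .of_integral_ne_zero (by rw [integral_rpow_mul_exp_neg_mul_Ioi hs hc]; positivity)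
  have hsplit : ∀ y ∈ Ioi (0 : ℝ), y ^ (a - 1) * (1 + y) ^ 2 * exp (-(c * y)) =
      y ^ (a - 1) * exp (-(c * y)) + 2 * (y ^ (a + 1 - 1) * exp (-(c * y))) +
        y ^ (a + 2 - 1) * exp (-(c * y)) := by
    intro y hy
    rw [add_sub_right_comm, rpow_add_one (ne_of_gt hy), add_sub_right_comm, rpow_add hy, rpow_two]
    ring
  rw [setIntegral_congr_fun measurableSet_Ioi hsplit, integral_add, integral_add,
    integral_const_mul,
    integral_rpow_mul_exp_neg_mul_Ioi ha hc, integral_rpow_mul_exp_neg_mul_Ioi (by linarith) hc,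
    integral_rpow_mul_exp_neg_mul_Ioi (by linarith) hc]
  · rw [show a + 2 = a + 1 + 1 by ring, Gamma_add_one (s := a + 1) (by positivity),
      Gamma_add_one ha.ne']
    simp only [rpow_add_one (one_div_pos.2 hc).ne']
    rw [one_div, inv_rpow hc.le, ← rpow_neg hc.le]
    field_simp
    ring
  · exact hint a ha
  · exact (hint _ (by linarith)).const_mul 2
  · exact (hint a ha).add ((hint _ (by linarith)).const_mul 2)
  · exact hint _ (by linarith)

theorem integral_sisDensityKernel {N a c : ℝ} (hN : 0 < N) (ha : 0 < a) (hc : 0 < c) :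
    ∫ x in (0 : ℝ)..N, sisDensityKernel N a c x =
      c ^ (-a) * ((1 + a / c) ^ 2 + a / c ^ 2) * Gamma a := by
  rw [intervalIntegral.integral_of_le hN.le, integral_Ioc_eq_integral_Ioo,
    integral_Ioo_eq_integral_Ioi_mul_div_one_add hN,
    ← integral_rpow_mul_one_add_sq_mul_exp_neg_mul_Ioi ha hc]
  exact setIntegral_congr_fun measurableSet_Ioi fun y hy =>
    mul_sisDensityKernel_mul_div_one_add hN hy a c

theorem invariant_density_integrates_to_one_general
    (N μ γ σ : ℝ) (hN : 0 < N) (hμ : 0 < μ) (hγ : 0 < γ) (hσ : 0 < σ)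
    (R0S c0 C : ℝ)
    (hc0 : c0 = 2 * (μ + γ) / (σ ^ 2 * N ^ 2))
    (hR : 1 < R0S)
    (hCpos : 0 < C)
    (hC : C⁻¹ = c0 ^ (-(c0 * (R0S - 1))) * (R0S ^ 2 + c0⁻¹ * (R0S - 1)) *
      Real.Gamma (c0 * (R0S - 1)))
    (p : ℝ → ℝ)
    (hp : ∀ x, p x = C * N ^ 3 * x ^ (c0 * (R0S - 1) - 1) *
      (N - x) ^ (-(c0 * (R0S - 1) + 3)) * Real.exp (-c0 * x / (N - x))) :
    ∫ x in (0:ℝ)..N, p x = 1 := by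
  have hc0pos : 0 < c0 := by rw [hc0]; positivity
  have hp' : p = fun x => C * sisDensityKernel N (c0 * (R0S - 1)) c0 x :=
    funext fun x => by rw [hp, sisDensityKernel]; ring
  have hmoment : (1 + c0 * (R0S - 1) / c0) ^ 2 + c0 * (R0S - 1) / c0 ^ 2 =
      R0S ^ 2 + c0⁻¹ * (R0S - 1) := by
    field_simp
    ring
  rw [hp', intervalIntegral.integral_const_mul,
    integral_sisDensityKernel hN (mul_pos hc0pos (sub_pos.2 hR)) hc0pos, hmoment, ← hC,
    mul_inv_cancel₀ hCpos.ne']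

/-- The invariant density integrates to one: `∫₀^N p_σ^s(x) dx = 1`. -/
theorem invariant_density_integrates_to_one
    (N β μ γ σ : ℝ) (hN : 0 < N) (hβ : 0 < β) (hμ : 0 < μ) (hγ : 0 < γ) (hσ : 0 < σ)
    (R0S c0 C : ℝ)
    (hR0S : R0S = β * N / (μ + γ) - σ ^ 2 * N ^ 2 / (2 * (μ + γ)))
    (hc0 : c0 = 2 * (μ + γ) / (σ ^ 2 * N ^ 2))
    (hR : 1 < R0S)
    (hCpos : 0 < C)
    (hC : C⁻¹ = c0 ^ (-(c0 * (R0S - 1))) * (R0S ^ 2 + c0⁻¹ * (R0S - 1)) *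
      Real.Gamma (c0 * (R0S - 1)))
    (p : ℝ → ℝ)
    (hp : ∀ x, p x = C * N ^ 3 * x ^ (c0 * (R0S - 1) - 1) *
      (N - x) ^ (-(c0 * (R0S - 1) + 3)) * Real.exp (-c0 * x / (N - x))) :
    ∫ x in (0:ℝ)..N, p x = 1 :=
  invariant_density_integrates_to_one_general N μ γ σ hN hμ hγ hσ R0S c0 C hc0 hR hCpos hC p hp
end

section
/- The invariant density p_σ^s solves the stationary Fokker–Planck equation: for every x ∈ (0,N), x(βN − μ − γ − βx) p_σ^s(x) − (σ²/2) · d/dx [x²(N−x)² p_σ^s(x)] = 0, where the function x ↦ x²(N−x)² p_σ^s(x) is differentiable on (0,N). -/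
open Real MeasureTheory Filter Set Topology

/-!
On `(0, N)` the flux profile `y ↦ y² (N - y)² p(y)` is `C N³ exp ψ(y)` with
`ψ(y) = sisLogProfile N c₀ a y = (a + 1) log y - (a + 1) log (N - y) - c₀ y / (N - y)` and `a = c₀ (R₀ˢ - 1)`, so its derivative
is the profile times `ψ'`. The stationary equation then reduces to the rational identity
`x (β N - μ - γ - β x) = σ²/2 · x² (N - x)² ψ'(x)`, which holds because `c₀ σ² N² / 2 = μ + γ`
and `a + 1 = 2β / (σ² N) - c₀`.
-/

noncomputable def sisLogProfile (N c a y : ℝ) : ℝ :=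
  (a + 1) * log y - (a + 1) * log (N - y) - c * y / (N - y)

section Profile

variable {N c a x : ℝ}

theorem hasDerivAt_sisLogProfile (hx : x ∈ Ioo 0 N) :
    HasDerivAt (sisLogProfile N c a)
      ((a + 1) / x + (a + 1) / (N - x) - c * N / (N - x) ^ 2) x := by
  have hNx : N - x ≠ 0 := (sub_pos.mpr hx.2).ne'
  have hsub : HasDerivAt (fun y => N - y) (-1) x := (hasDerivAt_id x).const_sub N
  have hlog : HasDerivAt log x⁻¹ x := hasDerivAt_log hx.1.ne'
  have hlogSub : HasDerivAt (fun y => log (N - y)) ((N - x)⁻¹ * (-1)) x :=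
    (hasDerivAt_log hNx).comp x hsub
  have hfrac : HasDerivAt (fun y => c * y / (N - y))
      ((c * (N - x) - c * x * -1) / (N - x) ^ 2) x :=
    ((hasDerivAt_id x).const_mul c).div hsub hNx |>.congr_deriv (by simp)
  refine (((hlog.const_mul (a + 1)).sub (hlogSub.const_mul (a + 1))).sub hfrac).congr_deriv ?_
  field_simp
  ring

theorem sq_mul_sq_mul_density_eq_exp_sisLogProfile (K : ℝ) {y : ℝ} (hy : y ∈ Ioo 0 N) :
    y ^ 2 * (N - y) ^ 2 *
        (K * y ^ (a - 1) * (N - y) ^ (-(a + 3)) * exp (-c * y / (N - y))) =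
      K * exp (sisLogProfile N c a y) := by
  have hy0 : 0 < y := hy.1
  have hNy : 0 < N - y := sub_pos.mpr hy.2
  have hpow : ∀ {z : ℝ}, 0 < z → ∀ b : ℝ, z ^ 2 * z ^ b = exp (log z * (b + 2)) := by
    intro z hz b
    rw [← rpow_natCast, ← rpow_add hz, rpow_def_of_pos hz]
    norm_num [add_comm]
  have hy' := hpow hy0 (a - 1)
  have hNy' := hpow hNy (-(a + 3))
  calc y ^ 2 * (N - y) ^ 2 *
        (K * y ^ (a - 1) * (N - y) ^ (-(a + 3)) * exp (-c * y / (N - y)))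
      = K * ((y ^ 2 * y ^ (a - 1)) * ((N - y) ^ 2 * (N - y) ^ (-(a + 3))) *
          exp (-c * y / (N - y))) := by ring
    _ = K * exp (sisLogProfile N c a y) := by
      rw [hy', hNy', ← exp_add, ← exp_add, sisLogProfile]
      congr 2
      ring

theorem hasDerivAt_sq_mul_sq_mul_density (K : ℝ) {p : ℝ → ℝ}
    (hp : ∀ y, p y = K * y ^ (a - 1) * (N - y) ^ (-(a + 3)) * exp (-c * y / (N - y)))
    (hx : x ∈ Ioo 0 N) :
    HasDerivAt (fun y => y ^ 2 * (N - y) ^ 2 * p y)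
      (x ^ 2 * (N - x) ^ 2 * p x *
        ((a + 1) / x + (a + 1) / (N - x) - c * N / (N - x) ^ 2)) x := by
  have hprofile : ∀ y ∈ Ioo 0 N,
      y ^ 2 * (N - y) ^ 2 * p y = K * exp (sisLogProfile N c a y) := fun y hy => by
    rw [hp, sq_mul_sq_mul_density_eq_exp_sisLogProfile K hy]
  have hexp := ((hasDerivAt_sisLogProfile (c := c) (a := a) hx).exp).const_mul K
  rw [← mul_assoc, ← hprofile x hx] at hexp
  exact hexp.congr_of_eventuallyEq <|
    eventually_of_mem (isOpen_Ioo.mem_nhds hx) hprofile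

end Profile

theorem sis_drift_eq_diffusion_mul_deriv_sisLogProfile {N β μ γ σ R0S c0 x : ℝ}
    (hμγ : μ + γ ≠ 0) (hσ : σ ≠ 0)
    (hR0S : R0S = β * N / (μ + γ) - σ ^ 2 * N ^ 2 / (2 * (μ + γ)))
    (hc0 : c0 = 2 * (μ + γ) / (σ ^ 2 * N ^ 2)) (hx : x ∈ Ioo 0 N) :
    x * (β * N - μ - γ - β * x) =
      σ ^ 2 / 2 * (x ^ 2 * (N - x) ^ 2) *
        ((c0 * (R0S - 1) + 1) / x + (c0 * (R0S - 1) + 1) / (N - x) -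
          c0 * N / (N - x) ^ 2) := by
  have hx0 : x ≠ 0 := hx.1.ne'
  have hN : N ≠ 0 := (hx.1.trans hx.2).ne'
  have hNx : N - x ≠ 0 := (sub_pos.mpr hx.2).ne'
  subst hR0S hc0
  field_simp
  ring

theorem invariant_density_solves_stationary_FPE_general
    (N β μ γ σ : ℝ) (hμ : 0 < μ) (hγ : 0 < γ) (hσ : 0 < σ)
    (R0S c0 C : ℝ)
    (hR0S : R0S = β * N / (μ + γ) - σ ^ 2 * N ^ 2 / (2 * (μ + γ)))
    (hc0 : c0 = 2 * (μ + γ) / (σ ^ 2 * N ^ 2))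
    (p : ℝ → ℝ)
    (hp : ∀ x, p x = C * N ^ 3 * x ^ (c0 * (R0S - 1) - 1) *
      (N - x) ^ (-(c0 * (R0S - 1) + 3)) * Real.exp (-c0 * x / (N - x))) :
    ∀ x ∈ Set.Ioo (0:ℝ) N, ∃ d : ℝ,
      HasDerivAt (fun y => y ^ 2 * (N - y) ^ 2 * p y) d x ∧
      x * (β * N - μ - γ - β * x) * p x - σ ^ 2 / 2 * d = 0 := by
  intro x hx
  refine ⟨_, hasDerivAt_sq_mul_sq_mul_density (C * N ^ 3) hp hx, ?_⟩
  rw [sis_drift_eq_diffusion_mul_deriv_sisLogProfile (by positivity) hσ.ne' hR0S hc0 hx]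
  ring

/-- The invariant density solves the stationary Fokker–Planck equation on `(0,N)`. -/
theorem invariant_density_solves_stationary_FPE
    (N β μ γ σ : ℝ) (hN : 0 < N) (hβ : 0 < β) (hμ : 0 < μ) (hγ : 0 < γ) (hσ : 0 < σ)
    (R0S c0 C : ℝ)
    (hR0S : R0S = β * N / (μ + γ) - σ ^ 2 * N ^ 2 / (2 * (μ + γ)))
    (hc0 : c0 = 2 * (μ + γ) / (σ ^ 2 * N ^ 2))
    (hR : 1 < R0S)
    (hCpos : 0 < C)
    (hC : C⁻¹ = c0 ^ (-(c0 * (R0S - 1))) * (R0S ^ 2 + c0⁻¹ * (R0S - 1)) *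
      Real.Gamma (c0 * (R0S - 1)))
    (p : ℝ → ℝ)
    (hp : ∀ x, p x = C * N ^ 3 * x ^ (c0 * (R0S - 1) - 1) *
      (N - x) ^ (-(c0 * (R0S - 1) + 3)) * Real.exp (-c0 * x / (N - x))) :
    ∀ x ∈ Set.Ioo (0:ℝ) N, ∃ d : ℝ,
      HasDerivAt (fun y => y ^ 2 * (N - y) ^ 2 * p y) d x ∧
      x * (β * N - μ - γ - β * x) * p x - σ ^ 2 / 2 * d = 0 :=
  invariant_density_solves_stationary_FPE_general N β μ γ σ hμ hγ hσ R0S c0 C hR0S hc0 p hp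
end

section
/- The function u_σ^s is twice differentiable on ℝ and solves the stationary Fokker–Planck equation: for every ξ ∈ ℝ, −d/dξ { [ (βN − μ − γ − σ²N²/2) − (μ+γ)e^ξ + σ²N² e^ξ/(1 + e^ξ) ] u_σ^s(ξ) } + (σ²N²/2) (u_σ^s)''(ξ) = 0. -/
open Real MeasureTheory Filter Set Topology

/-!
With `D = σ²N²/2`, the density is `u = C exp φ` where `φ'(ξ) = a - c₀ e^ξ + 2 e^ξ / (e^ξ + 1)` and
`a = c₀ (R₀ˢ - 1)`. Substituting the definitions of `R₀ˢ` and `c₀` shows that the drift equals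
`D φ'`, so the probability flux `b u - D u' = D φ' u - D u'` vanishes identically, and a
zero-flux density solves the stationary Fokker–Planck equation `-(b u)' + D u'' = 0`.
-/

theorem stationary_fokkerPlanck_of_zero_flux {b u : ℝ → ℝ} {D : ℝ}
    (hflux : ∀ x, b x * u x = D * deriv u x) (x : ℝ) :
    -deriv (fun y => b y * u y) x + D * deriv (deriv u) x = 0 := by
  rw [funext hflux, deriv_const_mul_field']
  ring

theorem hasDerivAt_const_mul_exp_comp {φ φ' : ℝ → ℝ} (C : ℝ)
    (hφ : ∀ x, HasDerivAt φ (φ' x) x) (x : ℝ) :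
    HasDerivAt (fun y => C * exp (φ y)) (φ' x * (C * exp (φ x))) x :=
  ((hφ x).exp.const_mul C).congr_deriv (by ring)

theorem hasDerivAt_log_exp_add_one (x : ℝ) :
    HasDerivAt (fun y => log (exp y + 1)) (exp x / (exp x + 1)) x :=
  ((hasDerivAt_exp x).add_const 1).log (by positivity)

theorem hasDerivAt_linear_sub_exp_add_two_log (a c x : ℝ) :
    HasDerivAt (fun y => a * y - c * exp y + 2 * log (exp y + 1))
      (a - c * exp x + 2 * (exp x / (exp x + 1))) x := by
  have hlin : HasDerivAt (fun y => a * y) a x := by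
    simpa using (hasDerivAt_id x).const_mul a
  exact (hlin.sub ((hasDerivAt_exp x).const_mul c)).add
    ((hasDerivAt_log_exp_add_one x).const_mul 2)

theorem differentiable_sub_exp_add_two_logistic (a c : ℝ) :
    Differentiable ℝ (fun x => a - c * exp x + 2 * (exp x / (exp x + 1))) := fun x =>
  ((differentiableAt_const a).sub (differentiableAt_exp.const_mul c)).add
    ((differentiableAt_exp.div (differentiableAt_exp.add_const 1) (by positivity)).const_mul 2)

theorem u_solves_stationary_FPE_general
    (N β μ γ σ : ℝ) (hN : 0 < N) (hμ : 0 < μ) (hγ : 0 < γ) (hσ : 0 < σ)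
    (R0S c0 C : ℝ)
    (hR0S : R0S = β * N / (μ + γ) - σ ^ 2 * N ^ 2 / (2 * (μ + γ)))
    (hc0 : c0 = 2 * (μ + γ) / (σ ^ 2 * N ^ 2))
    (u : ℝ → ℝ)
    (hu : ∀ ξ, u ξ = C * Real.exp (c0 * (R0S - 1) * ξ - c0 * Real.exp ξ +
      2 * Real.log (Real.exp ξ + 1))) :
    Differentiable ℝ u ∧ Differentiable ℝ (deriv u) ∧
    ∀ ξ : ℝ,
      -(deriv (fun η => ((β * N - μ - γ - σ ^ 2 * N ^ 2 / 2) - (μ + γ) * Real.exp η +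
          σ ^ 2 * N ^ 2 * Real.exp η / (1 + Real.exp η)) * u η) ξ) +
        σ ^ 2 * N ^ 2 / 2 * deriv (deriv u) ξ = 0 := by
  set w : ℝ → ℝ := fun ξ => c0 * (R0S - 1) - c0 * exp ξ + 2 * (exp ξ / (exp ξ + 1))
  have hu' : ∀ ξ, HasDerivAt u (w ξ * u ξ) ξ := by
    rw [funext hu]
    exact hasDerivAt_const_mul_exp_comp C (hasDerivAt_linear_sub_exp_add_two_log _ c0)
  have hderiv : deriv u = fun ξ => w ξ * u ξ := funext fun ξ => (hu' ξ).deriv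
  have hdiff : Differentiable ℝ u := fun ξ => (hu' ξ).differentiableAt
  have hdrift : ∀ η, (β * N - μ - γ - σ ^ 2 * N ^ 2 / 2) - (μ + γ) * exp η +
      σ ^ 2 * N ^ 2 * exp η / (1 + exp η) = σ ^ 2 * N ^ 2 / 2 * w η := by
    intro η
    have hD : σ ^ 2 * N ^ 2 ≠ 0 := by positivity
    have hμγ : μ + γ ≠ 0 := by positivity
    have hexp : exp η + 1 ≠ 0 := by positivity
    simp only [w, hR0S, hc0]
    field_simp
    ring
  refine ⟨hdiff, ?_, stationary_fokkerPlanck_of_zero_flux fun η => ?_⟩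
  · rw [hderiv]
    exact (differentiable_sub_exp_add_two_logistic _ c0).mul hdiff
  · rw [hdrift, hderiv, mul_assoc]

/-- `u_σ^s` is twice differentiable on `ℝ` and solves the stationary
Fokker–Planck equation. -/
theorem u_solves_stationary_FPE
    (N β μ γ σ : ℝ) (hN : 0 < N) (hβ : 0 < β) (hμ : 0 < μ) (hγ : 0 < γ) (hσ : 0 < σ)
    (R0S c0 C : ℝ)
    (hR0S : R0S = β * N / (μ + γ) - σ ^ 2 * N ^ 2 / (2 * (μ + γ)))
    (hc0 : c0 = 2 * (μ + γ) / (σ ^ 2 * N ^ 2))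
    (hR : 1 < R0S)
    (hCpos : 0 < C)
    (hC : C⁻¹ = c0 ^ (-(c0 * (R0S - 1))) * (R0S ^ 2 + c0⁻¹ * (R0S - 1)) *
      Real.Gamma (c0 * (R0S - 1)))
    (u : ℝ → ℝ)
    (hu : ∀ ξ, u ξ = C * Real.exp (c0 * (R0S - 1) * ξ - c0 * Real.exp ξ +
      2 * Real.log (Real.exp ξ + 1))) :
    Differentiable ℝ u ∧ Differentiable ℝ (deriv u) ∧
    ∀ ξ : ℝ,
      -(deriv (fun η => ((β * N - μ - γ - σ ^ 2 * N ^ 2 / 2) - (μ + γ) * Real.exp η +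
          σ ^ 2 * N ^ 2 * Real.exp η / (1 + Real.exp η)) * u η) ξ) +
        σ ^ 2 * N ^ 2 / 2 * deriv (deriv u) ξ = 0 :=
  u_solves_stationary_FPE_general N β μ γ σ hN hμ hγ hσ R0S c0 C hR0S hc0 u hu
end

section
/- First moment identity for the invariant density: (βN − μ − γ) ∫₀^N x p_σ^s(x) dx = β ∫₀^N x² p_σ^s(x) dx. -/
open Real MeasureTheory Filter Set Topology

/-!
Write `a = c₀ (R₀ˢ - 1)`, so that `x p(x)` is `C N³` times
`w(x) = x ^ a (N - x) ^ (-(a + 3)) exp (-c₀ x / (N - x))`. The function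
`F(x) = x ^ (a + 1) (N - x) ^ (-(a + 1)) exp (-c₀ x / (N - x))` has derivative
`N ((a + 1) N - (a + 1 + c₀) x) w(x)` on `(0, N)` and vanishes at both ends of `[0, N]`
(at `N` because the exponential beats every power of `N - x`), so
`(a + 1) N ∫ w = (a + 1 + c₀) ∫ x w`. The identity follows since
`β N - μ - γ = (σ² N / 2) (a + 1) N` and `β = (σ² N / 2) (a + 1 + c₀)`.
-/

/-- At `x = N` the conventions `0 ^ (-e) = 0` (for `e ≠ 0`) and `t / 0 = 0` make this `0`, its
limit from the left. -/
noncomputable def sisWeight (N c b e x : ℝ) : ℝ :=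
  x ^ b * (N - x) ^ (-e) * exp (-c * x / (N - x))

section

variable {N c : ℝ}

theorem tendsto_rpow_neg_mul_exp_div_nhdsLT (hN : 0 < N) (hc : 0 < c) (r : ℝ) :
    Tendsto (fun x => (N - x) ^ (-r) * exp (-c * x / (N - x))) (𝓝[<] N) (𝓝 0) := by
  have hsub : Tendsto (fun x : ℝ => N - x) (𝓝[<] N) (𝓝[>] 0) := by
    refine tendsto_nhdsWithin_of_tendsto_nhds_of_eventually_within _ ?_ ?_
    · have := ((continuous_sub_left N).tendsto N).mono_left (nhdsWithin_le_nhds (s := Iio N))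
      rwa [sub_self] at this
    · filter_upwards [self_mem_nhdsWithin] with x (hx : x < N) using sub_pos.2 hx
  have hinv : Tendsto (fun x : ℝ => (N - x)⁻¹) (𝓝[<] N) atTop :=
    tendsto_inv_nhdsGT_zero.comp hsub
  -- `-c x / (N - x) = c - c N / (N - x)`: this is `t ^ r * exp (-c N t) * exp c`
  -- at `t = (N - x)⁻¹ → ∞`
  have hlim := ((tendsto_rpow_mul_exp_neg_mul_atTop_nhds_zero r (c * N)
    (by positivity)).mul_const (exp c)).comp hinv
  rw [zero_mul] at hlim
  refine hlim.congr' ?_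
  filter_upwards [self_mem_nhdsWithin] with x (hx : x < N)
  have hNx : 0 < N - x := sub_pos.2 hx
  simp only [Function.comp_apply]
  rw [inv_rpow hNx.le, ← rpow_neg hNx.le, mul_assoc, ← exp_add]
  congr 2
  field_simp
  ring

theorem sisWeight_self {b e : ℝ} (he : e ≠ 0) : sisWeight N c b e N = 0 := by
  simp [sisWeight, zero_rpow (neg_ne_zero.2 he)]

theorem sisWeight_zero {b e : ℝ} (hb : b ≠ 0) : sisWeight N c b e 0 = 0 := by
  simp [sisWeight, zero_rpow hb]

theorem continuousOn_sisWeight (hN : 0 < N) (hc : 0 < c) {b e : ℝ} (hb : 0 ≤ b) (he : e ≠ 0) :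
    ContinuousOn (sisWeight N c b e) (Icc 0 N) := by
  intro x hx
  rcases hx.2.lt_or_eq with hxN | rfl
  · have hNx : N - x ≠ 0 := (sub_pos.2 hxN).ne'
    refine ContinuousAt.continuousWithinAt ?_
    unfold sisWeight
    fun_prop (disch := first | exact Or.inr hb | exact Or.inl hNx | exact hNx)
  · have hlim := ((continuousAt_rpow_const _ b (Or.inr hb)).tendsto.mono_left
      nhdsWithin_le_nhds).mul (tendsto_rpow_neg_mul_exp_div_nhdsLT hN hc e)
    rw [mul_zero, ← sisWeight_self (c := c) (b := b) he] at hlim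
    have hIcc : Icc 0 x \ {x} ⊆ Iio x := fun y hy => hy.1.2.lt_of_ne hy.2
    rw [← continuousWithinAt_sdiff_self]
    exact (hlim.congr fun y => by simp only [sisWeight, mul_assoc]).mono_left
      (nhdsWithin_mono _ hIcc)

theorem hasDerivAt_sisWeight {b x : ℝ} (hx : x ∈ Ioo 0 N) :
    HasDerivAt (sisWeight N c (b + 1) (b + 1))
      (N * ((b + 1) * N - (b + 1 + c) * x) * sisWeight N c b (b + 3) x) x := by
  obtain ⟨hx0, hxN⟩ := hx
  have hNx : 0 < N - x := sub_pos.2 hxN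
  have hsub : HasDerivAt (fun y : ℝ => N - y) (-1) x := (hasDerivAt_id x).const_sub N
  have hpow := hasDerivAt_rpow_const (p := b + 1) (Or.inl hx0.ne')
  have hpow' := hsub.rpow_const (p := -(b + 1)) (Or.inl hNx.ne')
  have hexp := (((hasDerivAt_id' x).const_mul (-c)).fun_div hsub hNx.ne').exp
  refine ((hpow.fun_mul hpow').fun_mul hexp).congr_deriv ?_
  unfold sisWeight
  rw [show b + 1 - 1 = b by ring, show -(b + 1) - 1 = -(b + 3) + 1 by ring,
    show -(b + 1) = -(b + 3) + 1 + 1 by ring, rpow_add_one hx0.ne',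
    rpow_add_one hNx.ne', rpow_add_one hNx.ne']
  field_simp
  ring

theorem integral_sisWeight_moment (hN : 0 < N) (hc : 0 < c) {b : ℝ} (hb : 0 ≤ b) :
    (b + 1) * N * ∫ x in (0 : ℝ)..N, sisWeight N c b (b + 3) x =
      (b + 1 + c) * ∫ x in (0 : ℝ)..N, x * sisWeight N c b (b + 3) x := by
  have hcont := continuousOn_sisWeight hN hc hb (by linarith : b + 3 ≠ 0)
  rw [← uIcc_of_le hN.le] at hcont
  have hw : IntervalIntegrable (sisWeight N c b (b + 3)) volume 0 N := hcont.intervalIntegrable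
  have hxw : IntervalIntegrable (fun x => x * sisWeight N c b (b + 3) x) volume 0 N :=
    (continuousOn_id.mul hcont).intervalIntegrable
  have hFTC := intervalIntegral.integral_eq_sub_of_hasDerivAt_of_le hN.le
    (continuousOn_sisWeight hN hc (by linarith : 0 ≤ b + 1) (by linarith : b + 1 ≠ 0))
    (fun x hx => hasDerivAt_sisWeight (c := c) (b := b) hx)
    ((continuousOn_const.mul (continuousOn_const.sub (continuousOn_const.mul continuousOn_id))).mul
      hcont).intervalIntegrable
  have hexpand : ∀ x, N * ((b + 1) * N - (b + 1 + c) * x) * sisWeight N c b (b + 3) x =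
      N * ((b + 1) * N * sisWeight N c b (b + 3) x -
        (b + 1 + c) * (x * sisWeight N c b (b + 3) x)) := fun x => by ring
  simp_rw [hexpand] at hFTC
  rw [intervalIntegral.integral_const_mul, intervalIntegral.integral_sub (hw.const_mul _)
    (hxw.const_mul _), intervalIntegral.integral_const_mul, intervalIntegral.integral_const_mul,
    sisWeight_self (by linarith), sisWeight_zero (by linarith), sub_zero] at hFTC
  linarith [(mul_eq_zero.1 hFTC).resolve_left hN.ne']

end

theorem first_moment_identity_general
    (N β μ γ σ : ℝ) (hN : 0 < N) (hμ : 0 < μ) (hγ : 0 < γ) (hσ : 0 < σ)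
    (R0S c0 C : ℝ)
    (hR0S : R0S = β * N / (μ + γ) - σ ^ 2 * N ^ 2 / (2 * (μ + γ)))
    (hc0 : c0 = 2 * (μ + γ) / (σ ^ 2 * N ^ 2))
    (hR : 1 < R0S)
    (p : ℝ → ℝ)
    (hp : ∀ x, p x = C * N ^ 3 * x ^ (c0 * (R0S - 1) - 1) *
      (N - x) ^ (-(c0 * (R0S - 1) + 3)) * Real.exp (-c0 * x / (N - x))) :
    (β * N - μ - γ) * ∫ x in (0:ℝ)..N, x * p x = β * ∫ x in (0:ℝ)..N, x ^ 2 * p x := by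
  set a := c0 * (R0S - 1) with ha_def
  have hc0pos : 0 < c0 := by rw [hc0]; positivity
  have ha : 0 < a := mul_pos hc0pos (by linarith)
  have hdrift : β * N - μ - γ = σ ^ 2 / 2 * N * ((a + 1) * N) := by
    rw [ha_def, hR0S, hc0]; field_simp; ring
  have hrate : β = σ ^ 2 / 2 * N * (a + 1 + c0) := by
    rw [ha_def, hR0S, hc0]; field_simp; ring
  have hxp : ∀ x ∈ uIcc 0 N, x * p x = C * N ^ 3 * sisWeight N c0 a (a + 3) x := by
    intro x hx
    rw [uIcc_of_le hN.le] at hx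
    have hpow : x * x ^ (a - 1) = x ^ a := by
      rw [← rpow_one_add' hx.1 (by simp [ha.ne']), add_sub_cancel]
    rw [hp, sisWeight, ← hpow]
    ring
  have hx2p : ∀ x ∈ uIcc 0 N, x ^ 2 * p x = C * N ^ 3 * (x * sisWeight N c0 a (a + 3) x) := by
    intro x hx
    rw [sq, mul_assoc, hxp x hx]
    ring
  rw [intervalIntegral.integral_congr hxp, intervalIntegral.integral_congr hx2p,
    intervalIntegral.integral_const_mul, intervalIntegral.integral_const_mul, hdrift, hrate]
  linear_combination (σ ^ 2 / 2 * N * (C * N ^ 3)) * integral_sisWeight_moment hN hc0pos ha.le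

/-- first moment identity for the invariant density. -/
theorem first_moment_identity
    (N β μ γ σ : ℝ) (hN : 0 < N) (hβ : 0 < β) (hμ : 0 < μ) (hγ : 0 < γ) (hσ : 0 < σ)
    (R0S c0 C : ℝ)
    (hR0S : R0S = β * N / (μ + γ) - σ ^ 2 * N ^ 2 / (2 * (μ + γ)))
    (hc0 : c0 = 2 * (μ + γ) / (σ ^ 2 * N ^ 2))
    (hR : 1 < R0S)
    (hCpos : 0 < C)
    (hC : C⁻¹ = c0 ^ (-(c0 * (R0S - 1))) * (R0S ^ 2 + c0⁻¹ * (R0S - 1)) *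
      Real.Gamma (c0 * (R0S - 1)))
    (p : ℝ → ℝ)
    (hp : ∀ x, p x = C * N ^ 3 * x ^ (c0 * (R0S - 1) - 1) *
      (N - x) ^ (-(c0 * (R0S - 1) + 3)) * Real.exp (-c0 * x / (N - x))) :
    (β * N - μ - γ) * ∫ x in (0:ℝ)..N, x * p x = β * ∫ x in (0:ℝ)..N, x ^ 2 * p x :=
  first_moment_identity_general N β μ γ σ hN hμ hγ hσ R0S c0 C hR0S hc0 hR p hp
end

section
/- Profile of the invariant density when R₀ᴾ < 1 (small noise-corrected persistence number), part (a): if R₀ˢ > 1, R₀ᴾ < 1, and R₀ᴾ ≤ 4(√c₀ − 1)/c₀, then p_σ^s(x) → +∞ as x → 0 from the right, and p_σ^s is strictly decreasing on the open interval (0, N). -/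
open Real MeasureTheory Filter Set Topology

/-!
Write `a = c₀ (R₀ˢ - 1)`, so that `p = C N³ x^(a-1) (N-x)^(-(a+3)) exp(-c₀ x/(N-x))` and
`a - 1 = c₀ (R₀ᴾ - 1)`. Thus `0 < a < 1`, and the pole `x^(a-1)` at the origin gives the blow-up.
The logarithmic derivative of `p` is `q(x) / (x (N-x)²)` with `q` a quadratic of leading
coefficient `-4`, and since `0 < a` the hypothesis `R₀ᴾ ≤ 4(√c₀ - 1)/c₀` forces its
discriminant to be nonpositive. Hence `p' < 0` on `(0, N)` except possibly at the vertex of `q`, which is enough for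
strict monotonicity.
-/

theorem strictAntiOn_of_hasDerivAt_neg_of_ne {D : Set ℝ} (hD : Convex ℝ D) {f f' : ℝ → ℝ}
    {x₀ : ℝ} (hf : ∀ x ∈ D, HasDerivAt f (f' x) x) (hf' : ∀ x ∈ D, x ≠ x₀ → f' x < 0) :
    StrictAntiOn f D := by
  have avoiding : ∀ u ∈ D, ∀ v ∈ D, u < v → x₀ ∉ Ioo u v → f v < f u := by
    intro u hu v hv huv hx₀
    have hsub : Icc u v ⊆ D := hD.ordConnected.out hu hv
    refine strictAntiOn_of_hasDerivWithinAt_neg (convex_Icc u v)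
      (fun x hx ↦ (hf x (hsub hx)).continuousAt.continuousWithinAt)
      (fun x hx ↦ (hf x (hsub (interior_subset hx))).hasDerivWithinAt) (fun x hx ↦ ?_)
      (left_mem_Icc.2 huv.le) (right_mem_Icc.2 huv.le) huv
    rw [interior_Icc] at hx
    exact hf' x (hsub (Ioo_subset_Icc_self hx)) (ne_of_mem_of_not_mem hx hx₀)
  intro x hx y hy hxy
  by_cases h : x₀ ∈ Ioo x y
  · have hx₀ : x₀ ∈ D := hD.ordConnected.out hx hy (Ioo_subset_Icc_self h)
    exact (avoiding x₀ hx₀ y hy h.2 fun h' ↦ h'.1.false).trans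
      (avoiding x hx x₀ hx₀ h.1 fun h' ↦ h'.2.false)
  · exact avoiding x hx y hy hxy h

/-- The invariant density, with `K = C N³`, `a = c₀ (R₀ˢ - 1)` and `c = c₀`. -/
noncomputable def sisProfile (K N a c x : ℝ) : ℝ :=
  K * x ^ (a - 1) * (N - x) ^ (-(a + 3)) * exp (-c * x / (N - x))

namespace sisProfile

variable {K N a c x : ℝ}

theorem pos (hK : 0 < K) (hx : x ∈ Ioo 0 N) : 0 < sisProfile K N a c x := by
  have hNx : 0 < N - x := sub_pos.2 hx.2
  have hx0 := hx.1
  unfold sisProfile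
  positivity

theorem tendsto_nhdsGT_zero (hK : 0 < K) (hN : 0 < N) (ha : a < 1) :
    Tendsto (sisProfile K N a c) (𝓝[>] 0) atTop := by
  set g : ℝ → ℝ := fun x ↦ K * ((N - x) ^ (-(a + 3)) * exp (-c * x / (N - x)))
  have hN0 : N - 0 ≠ 0 := by simpa using hN.ne'
  have hg : ContinuousAt g 0 :=
    continuousAt_const.mul <|
      ((continuousAt_const.sub continuousAt_id).rpow_const (Or.inl hN0)).mul <|
        continuous_exp.continuousAt.comp <|
          (continuousAt_const.mul continuousAt_id).div
            (continuousAt_const.sub continuousAt_id) hN0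
  have hg0 : 0 < g 0 := by
    simp only [g, sub_zero, mul_zero, zero_div, exp_zero, mul_one]
    positivity
  refine ((tendsto_rpow_neg_nhdsGT_zero (by linarith : a - 1 < 0)).atTop_mul_pos hg0
    (hg.tendsto.mono_left nhdsWithin_le_nhds)).congr fun x ↦ ?_
  simp only [sisProfile]
  ring

theorem hasDerivAt (hx : x ∈ Ioo 0 N) :
    HasDerivAt (sisProfile K N a c)
      (sisProfile K N a c x * ((a - 1) / x + (a + 3) / (N - x) - c * N / (N - x) ^ 2)) x := by
  obtain ⟨hx0, hxN⟩ := hx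
  have hNx : 0 < N - x := by linarith
  have hsub : HasDerivAt (fun t : ℝ ↦ N - t) (-1) x := by
    simpa using (hasDerivAt_id x).const_sub N
  have hpow : HasDerivAt (fun t : ℝ ↦ t ^ (a - 1)) ((a - 1) * x ^ (a - 1 - 1)) x :=
    hasDerivAt_rpow_const (Or.inl hx0.ne')
  have hpow' : HasDerivAt (fun t : ℝ ↦ (N - t) ^ (-(a + 3)))
      (-(a + 3) * (N - x) ^ (-(a + 3) - 1) * -1) x :=
    (hasDerivAt_rpow_const (Or.inl hNx.ne')).comp x hsub
  have hexp := ((hasDerivAt_id' x).const_mul (-c)).fun_div hsub hNx.ne' |>.exp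
  refine (((hpow.const_mul K).mul hpow').mul hexp).congr_deriv ?_
  rw [sisProfile, Pi.mul_apply, rpow_sub_one hx0.ne', rpow_sub_one hNx.ne']
  field_simp
  ring

end sisProfile

/-- Up to the factor `x (N - x)²`, the logarithmic derivative of `sisProfile K N a c` is a
concave quadratic with vertex at `N (5 - a - c) / 8`. -/
theorem sisProfile_logDeriv_neg {N a c x : ℝ} (hdisc : (5 - a - c) ^ 2 ≤ 16 * (1 - a))
    (hx : x ∈ Ioo 0 N) (hxv : x ≠ N * (5 - a - c) / 8) :
    (a - 1) / x + (a + 3) / (N - x) - c * N / (N - x) ^ 2 < 0 := by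
  obtain ⟨hx0, hxN⟩ := hx
  have hNx : 0 < N - x := by linarith
  have hsq : 0 < (x - N * (5 - a - c) / 8) ^ 2 := by
    have := sub_ne_zero.2 hxv
    positivity
  have hdiscN := mul_le_mul_of_nonneg_right hdisc (sq_nonneg N)
  rw [div_add_div _ _ hx0.ne' hNx.ne', div_sub_div _ _ (by positivity) (by positivity)]
  refine div_neg_of_neg_of_pos ?_ (by positivity)
  have hquad : ((a - 1) * (N - x) + x * (a + 3)) * (N - x) ^ 2 - x * (N - x) * (c * N)
      = (N - x) * (-4 * (x - N * (5 - a - c) / 8) ^ 2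
          + ((5 - a - c) ^ 2 * N ^ 2 - 16 * (1 - a) * N ^ 2) / 16) := by
    ring
  rw [hquad]
  exact mul_neg_of_pos_of_neg hNx (by linarith)

theorem strictAntiOn_sisProfile {K N a c : ℝ} (hK : 0 < K)
    (hdisc : (5 - a - c) ^ 2 ≤ 16 * (1 - a)) : StrictAntiOn (sisProfile K N a c) (Ioo 0 N) :=
  strictAntiOn_of_hasDerivAt_neg_of_ne (convex_Ioo 0 N) (fun _ hx ↦ sisProfile.hasDerivAt hx)
    fun _ hx hxv ↦ mul_neg_of_pos_of_neg (sisProfile.pos hK hx)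
      (sisProfile_logDeriv_neg hdisc hx hxv)

/-- With `t = √(1 - a) < 1`, the hypothesis reads `|s - 2| ≤ t` and the conclusion
`|t² + 4 - s²| ≤ 4 t`. -/
theorem sq_five_sub_sub_sq_le {a s : ℝ} (ha : 0 < a) (has : a ≤ 4 * s - 3 - s ^ 2) :
    (5 - a - s ^ 2) ^ 2 ≤ 16 * (1 - a) := by
  have hu : 0 ≤ 4 * s - 3 - s ^ 2 - a := by linarith
  have hu' : 4 * s - 3 - s ^ 2 - a ≤ 8 * s := by nlinarith
  nlinarith [mul_nonneg hu (sub_nonneg.2 hu')]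

theorem profile_R0P_lt_one_part_a_general
    (N β μ γ σ : ℝ) (hN : 0 < N) (hμ : 0 < μ) (hγ : 0 < γ) (hσ : 0 < σ)
    (R0S R0P c0 C : ℝ)
    (hR0S : R0S = β * N / (μ + γ) - σ ^ 2 * N ^ 2 / (2 * (μ + γ)))
    (hR0P : R0P = (β * N - σ ^ 2 * N ^ 2) / (μ + γ))
    (hc0 : c0 = 2 * (μ + γ) / (σ ^ 2 * N ^ 2))
    (hR : 1 < R0S)
    (hP : R0P < 1)
    (hPle : R0P ≤ 4 * (Real.sqrt c0 - 1) / c0)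
    (hCpos : 0 < C)
    (p : ℝ → ℝ)
    (hp : ∀ x, p x = C * N ^ 3 * x ^ (c0 * (R0S - 1) - 1) *
      (N - x) ^ (-(c0 * (R0S - 1) + 3)) * Real.exp (-c0 * x / (N - x))) :
    Tendsto p (𝓝[>] (0:ℝ)) atTop ∧ StrictAntiOn p (Set.Ioo 0 N) := by
  have hp : p = sisProfile (C * N ^ 3) N (c0 * (R0S - 1)) c0 := funext hp
  have hμγ : 0 < μ + γ := by linarith
  have hc0_pos : 0 < c0 := by rw [hc0]; positivity
  have hK : 0 < C * N ^ 3 := by positivity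
  have ha : 0 < c0 * (R0S - 1) := mul_pos hc0_pos (by linarith)
  have hR0S_R0P : c0 * (R0S - 1) - 1 = c0 * (R0P - 1) := by
    rw [hR0S, hR0P, hc0]
    field_simp
    ring
  have ha1 : c0 * (R0S - 1) < 1 := by
    have := mul_neg_of_pos_of_neg hc0_pos (sub_neg.2 hP)
    linarith
  rw [le_div_iff₀ hc0_pos] at hPle
  have hdisc := sq_five_sub_sub_sq_le ha (by rw [sq_sqrt hc0_pos.le]; linarith)
  rw [sq_sqrt hc0_pos.le] at hdisc
  rw [hp]
  exact ⟨sisProfile.tendsto_nhdsGT_zero hK hN ha1, strictAntiOn_sisProfile hK hdisc⟩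

/-- profile of the invariant density when `R₀ᴾ < 1`, part (a). -/
theorem profile_R0P_lt_one_part_a
    (N β μ γ σ : ℝ) (hN : 0 < N) (hβ : 0 < β) (hμ : 0 < μ) (hγ : 0 < γ) (hσ : 0 < σ)
    (R0S R0P c0 C : ℝ)
    (hR0S : R0S = β * N / (μ + γ) - σ ^ 2 * N ^ 2 / (2 * (μ + γ)))
    (hR0P : R0P = (β * N - σ ^ 2 * N ^ 2) / (μ + γ))
    (hc0 : c0 = 2 * (μ + γ) / (σ ^ 2 * N ^ 2))
    (hR : 1 < R0S)
    (hP : R0P < 1)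
    (hPle : R0P ≤ 4 * (Real.sqrt c0 - 1) / c0)
    (hCpos : 0 < C)
    (hC : C⁻¹ = c0 ^ (-(c0 * (R0S - 1))) * (R0S ^ 2 + c0⁻¹ * (R0S - 1)) *
      Real.Gamma (c0 * (R0S - 1)))
    (p : ℝ → ℝ)
    (hp : ∀ x, p x = C * N ^ 3 * x ^ (c0 * (R0S - 1) - 1) *
      (N - x) ^ (-(c0 * (R0S - 1) + 3)) * Real.exp (-c0 * x / (N - x))) :
    Tendsto p (𝓝[>] (0:ℝ)) atTop ∧ StrictAntiOn p (Set.Ioo 0 N) :=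
  profile_R0P_lt_one_part_a_general N β μ γ σ hN hμ hγ hσ R0S R0P c0 C hR0S hR0P hc0 hR hP hPle
    hCpos p hp
end

section
/- Profile of the invariant density when R₀ᴾ = 1: if R₀ˢ > 1 and R₀ᴾ = 1, then p_σ^s(x) → C/N as x → 0 from the right; moreover, (a) if c₀ ≥ 4 then p_σ^s is strictly decreasing on (0, N), while (b) if c₀ < 4 then p_σ^s is strictly increasing on (0, (1 − c₀/4)N) and strictly decreasing on ((1 − c₀/4)N, N). -/
/-! Since `R₀ˢ - R₀ᴾ = σ²N²/(2(μ+γ)) = 1/c₀`, the hypothesis `R₀ᴾ = 1` gives `c₀(R₀ˢ-1) = 1`: the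
power of `x` disappears and `p_σ^s(x) = C N³ (N-x)⁻⁴ exp(-c₀x/(N-x))`, which is continuous at `0`
with value `C N³ N⁻⁴ = C / N`. Its logarithmic derivative is `(4(N-x) - c₀N)/(N-x)²`, whose sign
changes exactly at `x = (1 - c₀/4) N`; this point is `≤ 0` when `c₀ ≥ 4`. -/

open Real Filter Set Topology

noncomputable def densityProfile (a c N x : ℝ) : ℝ :=
  (N - x) ^ (-a) * exp (-c * x / (N - x))

section DensityProfile

variable {a c N x : ℝ}

theorem densityProfile_pos (hx : x < N) : 0 < densityProfile a c N x := by
  unfold densityProfile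
  have := sub_pos.2 hx
  positivity

theorem hasDerivAt_densityProfile (hx : x < N) :
    HasDerivAt (densityProfile a c N)
      (densityProfile a c N x * ((a * (N - x) - c * N) / (N - x) ^ 2)) x := by
  have hNx : N - x ≠ 0 := (sub_pos.2 hx).ne'
  have hsub : HasDerivAt (fun y => N - y) (-1) x := by
    simpa using (hasDerivAt_id x).const_sub N
  have hpow := hsub.rpow_const (p := -a) (Or.inl hNx)
  have hlin : HasDerivAt (fun y => -c * y) (-c) x := by
    simpa using (hasDerivAt_id x).const_mul (-c)
  have hquot := hlin.div hsub hNx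
  refine (hpow.mul hquot.exp).congr_deriv ?_
  rw [rpow_sub_one hNx, densityProfile, Pi.div_apply]
  field_simp
  ring

theorem strictMonoOn_densityProfile (ha : 0 < a) (hc : 0 ≤ c) (hN : 0 < N) :
    StrictMonoOn (densityProfile a c N) (Iio ((1 - c / a) * N)) := by
  have hlt : ∀ x ∈ Iio ((1 - c / a) * N), x < N := fun x hx =>
    hx.out.trans_le (by nlinarith [div_nonneg hc ha.le])
  refine strictMonoOn_of_deriv_pos (convex_Iio _)
    (fun x hx => (hasDerivAt_densityProfile (hlt x hx)).continuousAt.continuousWithinAt) ?_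
  intro x hx
  rw [interior_Iio] at hx
  rw [(hasDerivAt_densityProfile (hlt x hx)).deriv]
  have hsign : c * N < a * (N - x) := by
    have h := mul_lt_mul_of_pos_left hx.out ha
    rw [show a * ((1 - c / a) * N) = a * N - c * N by field_simp] at h
    linarith
  exact mul_pos (densityProfile_pos (hlt x hx))
    (div_pos (sub_pos.2 hsign) (pow_pos (sub_pos.2 (hlt x hx)) 2))

theorem strictAntiOn_densityProfile (ha : 0 < a) :
    StrictAntiOn (densityProfile a c N) (Ioo ((1 - c / a) * N) N) := by
  refine strictAntiOn_of_deriv_neg (convex_Ioo _ _)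
    (fun x hx => (hasDerivAt_densityProfile hx.2).continuousAt.continuousWithinAt) ?_
  intro x hx
  rw [interior_Ioo] at hx
  rw [(hasDerivAt_densityProfile hx.2).deriv]
  have hsign : a * (N - x) < c * N := by
    have h := mul_lt_mul_of_pos_left hx.1 ha
    rw [show a * ((1 - c / a) * N) = a * N - c * N by field_simp] at h
    linarith
  exact mul_neg_of_pos_of_neg (densityProfile_pos hx.2)
    (div_neg_of_neg_of_pos (sub_neg.2 hsign) (pow_pos (sub_pos.2 hx.2) 2))

theorem densityProfile_zero : densityProfile a c N 0 = N ^ (-a) := by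
  simp [densityProfile]

end DensityProfile

theorem profile_R0P_eq_one_general
    (N β μ γ σ : ℝ) (hN : 0 < N) (hμ : 0 < μ) (hγ : 0 < γ) (hσ : 0 < σ)
    (R0S R0P c0 C : ℝ)
    (hR0S : R0S = β * N / (μ + γ) - σ ^ 2 * N ^ 2 / (2 * (μ + γ)))
    (hR0P : R0P = (β * N - σ ^ 2 * N ^ 2) / (μ + γ))
    (hc0 : c0 = 2 * (μ + γ) / (σ ^ 2 * N ^ 2))
    (hP : R0P = 1)
    (hCpos : 0 < C)
    (p : ℝ → ℝ)
    (hp : ∀ x, p x = C * N ^ 3 * x ^ (c0 * (R0S - 1) - 1) *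
      (N - x) ^ (-(c0 * (R0S - 1) + 3)) * Real.exp (-c0 * x / (N - x))) :
    Tendsto p (𝓝[>] (0:ℝ)) (𝓝 (C / N)) ∧
    (4 ≤ c0 → StrictAntiOn p (Set.Ioo 0 N)) ∧
    (c0 < 4 → StrictMonoOn p (Set.Ioo 0 ((1 - c0 / 4) * N)) ∧
      StrictAntiOn p (Set.Ioo ((1 - c0 / 4) * N) N)) := by
  have hμγ : 0 < μ + γ := add_pos hμ hγ
  have hc0_nonneg : 0 ≤ c0 := by rw [hc0]; positivity
  have hc0_ne : c0 ≠ 0 := by rw [hc0]; positivity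
  have hR0S_eq : R0S = R0P + c0⁻¹ := by
    rw [hR0S, hR0P, hc0, inv_div]
    field_simp
    ring
  have hexp : c0 * (R0S - 1) = 1 := by
    rw [hR0S_eq, hP, add_sub_cancel_left, mul_inv_cancel₀ hc0_ne]
  have hp_eq : p = fun x => C * N ^ 3 * densityProfile 4 c0 N x := by
    funext x
    rw [hp, hexp, densityProfile, sub_self, rpow_zero, mul_one, mul_assoc]
    norm_num
  have hK : 0 < C * N ^ 3 := by positivity
  subst hp_eq
  refine ⟨?_, fun h4 => ?_, fun h4 => ⟨?_, ?_⟩⟩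
  · have hlim : C * N ^ 3 * densityProfile 4 c0 N 0 = C / N := by
      rw [densityProfile_zero, rpow_neg hN.le, rpow_ofNat]
      field_simp
    rw [← hlim]
    exact (((hasDerivAt_densityProfile hN).continuousAt.const_mul _).tendsto).mono_left
      nhdsWithin_le_nhds
  · have h := (strictAntiOn_densityProfile (c := c0) (N := N) four_pos).mono
      (Ioo_subset_Ioo_left (show (1 - c0 / 4) * N ≤ 0 by nlinarith))
    exact fun x hx y hy hxy => mul_lt_mul_of_pos_left (h hx hy hxy) hK
  · have h := (strictMonoOn_densityProfile four_pos hc0_nonneg hN).mono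
      (Ioo_subset_Iio_self (a := 0))
    exact fun x hx y hy hxy => mul_lt_mul_of_pos_left (h hx hy hxy) hK
  · have h := strictAntiOn_densityProfile (c := c0) (N := N) four_pos
    exact fun x hx y hy hxy => mul_lt_mul_of_pos_left (h hx hy hxy) hK

/-- profile of the invariant density when `R₀ᴾ = 1`. -/
theorem profile_R0P_eq_one
    (N β μ γ σ : ℝ) (hN : 0 < N) (hβ : 0 < β) (hμ : 0 < μ) (hγ : 0 < γ) (hσ : 0 < σ)
    (R0S R0P c0 C : ℝ)
    (hR0S : R0S = β * N / (μ + γ) - σ ^ 2 * N ^ 2 / (2 * (μ + γ)))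
    (hR0P : R0P = (β * N - σ ^ 2 * N ^ 2) / (μ + γ))
    (hc0 : c0 = 2 * (μ + γ) / (σ ^ 2 * N ^ 2))
    (hR : 1 < R0S)
    (hP : R0P = 1)
    (hCpos : 0 < C)
    (hC : C⁻¹ = c0 ^ (-(c0 * (R0S - 1))) * (R0S ^ 2 + c0⁻¹ * (R0S - 1)) *
      Real.Gamma (c0 * (R0S - 1)))
    (p : ℝ → ℝ)
    (hp : ∀ x, p x = C * N ^ 3 * x ^ (c0 * (R0S - 1) - 1) *
      (N - x) ^ (-(c0 * (R0S - 1) + 3)) * Real.exp (-c0 * x / (N - x))) :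
    Tendsto p (𝓝[>] (0:ℝ)) (𝓝 (C / N)) ∧
    (4 ≤ c0 → StrictAntiOn p (Set.Ioo 0 N)) ∧
    (c0 < 4 → StrictMonoOn p (Set.Ioo 0 ((1 - c0 / 4) * N)) ∧
      StrictAntiOn p (Set.Ioo ((1 - c0 / 4) * N) N)) :=
  profile_R0P_eq_one_general N β μ γ σ hN hμ hγ hσ R0S R0P c0 C hR0S hR0P hc0 hP hCpos p hp
end

section
/- Profile of the invariant density when R₀ᴾ > 1: if R₀ᴾ > 1 (which implies R₀ˢ > 1), then p_σ^s(x) → 0 as x → 0 from the right, and p_σ^s is strictly increasing on (0, I_*(σ)) and strictly decreasing on (I_*(σ), N); in particular p_σ^s attains its maximum over (0,N) at I_*(σ), where I_*(σ) = (N/8)[(4 − R₀ᴾc₀) + √((4 + R₀ᴾc₀)² − 16c₀)]. -/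
open Real Filter Set Topology

/-!
On `(0, N)` the density is `K exp h` with `a = c₀(R₀ˢ - 1) = c₀(R₀ᴾ - 1) + 1 > 1` and
`h' = (a - 1)/x + (a + 3)/(N - x) - c₀N/(N - x)² = q(x) / (x (N - x)²)`, where
`q(x) = -4x² + N(5 - a - c₀)x + (a - 1)N²` is a downward parabola with `q(0) > 0`.
Its positive root is `I_*(σ)`, and `q(N) = -c₀N² < 0` places it in `(0, N)`; so `p` increases
before `I_*(σ)` and decreases after it. Since `a > 1`, the factor `x^(a-1)` makes `p` vanish at `0`.
-/

section NegQuadratic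

variable {A B D r x : ℝ}

lemma neg_quadratic_eq_mul_of_root (hroot : -A * r ^ 2 + B * r + D = 0) (x : ℝ) :
    -A * x ^ 2 + B * x + D = (r - x) * (A * (x + r) - B) := by
  linear_combination hroot

lemma neg_quadratic_factor_pos (hA : 0 < A) (hD : 0 < D) (hr : 0 < r)
    (hroot : -A * r ^ 2 + B * r + D = 0) (hx : 0 ≤ x) : 0 < A * (x + r) - B := by
  have hrD : r * (A * r - B) = D := by linear_combination -hroot
  have hAr : 0 < A * r - B := pos_of_mul_pos_right (hrD ▸ hD) hr.le
  nlinarith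

lemma neg_quadratic_pos_iff (hA : 0 < A) (hD : 0 < D) (hr : 0 < r)
    (hroot : -A * r ^ 2 + B * r + D = 0) (hx : 0 ≤ x) :
    0 < -A * x ^ 2 + B * x + D ↔ x < r := by
  rw [neg_quadratic_eq_mul_of_root hroot,
    mul_pos_iff_of_pos_right (neg_quadratic_factor_pos hA hD hr hroot hx), sub_pos]

lemma neg_quadratic_neg_iff (hA : 0 < A) (hD : 0 < D) (hr : 0 < r)
    (hroot : -A * r ^ 2 + B * r + D = 0) (hx : 0 ≤ x) :
    -A * x ^ 2 + B * x + D < 0 ↔ r < x := by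
  have hP := neg_quadratic_factor_pos hA hD hr hroot hx
  rw [neg_quadratic_eq_mul_of_root hroot]
  constructor <;> intro h <;> nlinarith

end NegQuadratic

noncomputable def sisDensity (K N a c x : ℝ) : ℝ :=
  K * x ^ (a - 1) * (N - x) ^ (-(a + 3)) * exp (-c * x / (N - x))

def sisQuadratic (N a c x : ℝ) : ℝ :=
  -4 * x ^ 2 + N * (5 - a - c) * x + (a - 1) * N ^ 2

noncomputable def sisMode (N R c : ℝ) : ℝ :=
  N / 8 * ((4 - R * c) + √((4 + R * c) ^ 2 - 16 * c))

section Density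

variable {K N a c x : ℝ}

lemma tendsto_sisDensity_nhdsGT_zero (hN : N ≠ 0) (ha : 1 < a) :
    Tendsto (sisDensity K N a c) (𝓝[>] 0) (𝓝 0) := by
  have hcont : ContinuousAt (sisDensity K N a c) 0 := by
    have hN0 : N - 0 ≠ 0 := by simpa using hN
    exact ((continuousAt_const.mul (continuousAt_rpow_const 0 _ (Or.inr (by linarith)))).mul
      ((continuousAt_const.sub continuousAt_id).rpow_const (Or.inl hN0))).mul
      ((continuousAt_const.mul continuousAt_id).div (continuousAt_const.sub continuousAt_id)
        hN0).rexp
  have hzero : sisDensity K N a c 0 = 0 := by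
    simp [sisDensity, zero_rpow (by linarith : a - 1 ≠ 0)]
  simpa [hzero] using hcont.tendsto.mono_left nhdsWithin_le_nhds

lemma sisDensity_eq_mul_exp (hx : x ∈ Ioo 0 N) :
    sisDensity K N a c x =
      K * exp ((a - 1) * log x - (a + 3) * log (N - x) - c * x / (N - x)) := by
  have hNx : 0 < N - x := sub_pos.2 hx.2
  rw [sisDensity, rpow_def_of_pos hx.1, rpow_def_of_pos hNx, mul_assoc, mul_assoc, ← exp_add,
    ← exp_add]
  ring_nf

lemma hasDerivAt_sisDensity (hx : x ∈ Ioo 0 N) :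
    HasDerivAt (sisDensity K N a c)
      (sisDensity K N a c x * (sisQuadratic N a c x / (x * (N - x) ^ 2))) x := by
  have hNx : 0 < N - x := sub_pos.2 hx.2
  have hlog : HasDerivAt (fun y => (a - 1) * log y - (a + 3) * log (N - y) - c * y / (N - y))
      (sisQuadratic N a c x / (x * (N - x) ^ 2)) x := by
    have hsub : HasDerivAt (fun y => N - y) (-1) x := by
      simpa using (hasDerivAt_id x).const_sub N
    refine ((((hasDerivAt_log hx.1.ne').const_mul (a - 1)).fun_sub
      ((hsub.log hNx.ne').const_mul (a + 3))).fun_sub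
      (((hasDerivAt_id' x).const_mul c).fun_div hsub hNx.ne')).congr_deriv ?_
    have hx0 : x ≠ 0 := hx.1.ne'
    rw [sisQuadratic]
    field_simp
    ring
  have heq : (fun y => K * exp ((a - 1) * log y - (a + 3) * log (N - y) - c * y / (N - y)))
      =ᶠ[𝓝 x] sisDensity K N a c :=
    eventually_of_mem (isOpen_Ioo.mem_nhds hx) fun y hy => (sisDensity_eq_mul_exp hy).symm
  refine ((hlog.exp.const_mul K).congr_of_eventuallyEq heq.symm).congr_deriv ?_
  rw [sisDensity_eq_mul_exp hx]
  ring

lemma sisDensity_pos (hK : 0 < K) (hx : x ∈ Ioo 0 N) : 0 < sisDensity K N a c x := by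
  rw [sisDensity_eq_mul_exp hx]
  positivity

lemma continuousOn_sisDensity : ContinuousOn (sisDensity K N a c) (Ioo 0 N) :=
  fun _ hx => (hasDerivAt_sisDensity hx).continuousAt.continuousWithinAt

variable {r : ℝ}

lemma strictMonoOn_sisDensity (hK : 0 < K) (ha : 1 < a) (hr : r ∈ Ioo 0 N)
    (hroot : sisQuadratic N a c r = 0) : StrictMonoOn (sisDensity K N a c) (Ioc 0 r) := by
  refine strictMonoOn_of_deriv_pos (convex_Ioc 0 r)
    (continuousOn_sisDensity.mono fun y hy => ⟨hy.1, hy.2.trans_lt hr.2⟩) fun x hx => ?_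
  rw [interior_Ioc] at hx
  have hxN : x ∈ Ioo 0 N := ⟨hx.1, hx.2.trans hr.2⟩
  have hq : 0 < sisQuadratic N a c x :=
    (neg_quadratic_pos_iff four_pos (mul_pos (sub_pos.2 ha) (pow_pos (hr.1.trans hr.2) 2)) hr.1 hroot hx.1.le).2 hx.2
  have hNx : 0 < N - x := sub_pos.2 hxN.2
  rw [(hasDerivAt_sisDensity hxN).deriv]
  exact mul_pos (sisDensity_pos hK hxN) (div_pos hq (mul_pos hxN.1 (pow_pos hNx 2)))

lemma strictAntiOn_sisDensity (hK : 0 < K) (ha : 1 < a) (hr : r ∈ Ioo 0 N)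
    (hroot : sisQuadratic N a c r = 0) : StrictAntiOn (sisDensity K N a c) (Ico r N) := by
  refine strictAntiOn_of_deriv_neg (convex_Ico r N)
    (continuousOn_sisDensity.mono fun y hy => ⟨hr.1.trans_le hy.1, hy.2⟩) fun x hx => ?_
  rw [interior_Ico] at hx
  have hxN : x ∈ Ioo 0 N := ⟨hr.1.trans hx.1, hx.2⟩
  have hq : sisQuadratic N a c x < 0 :=
    (neg_quadratic_neg_iff four_pos (mul_pos (sub_pos.2 ha) (pow_pos (hr.1.trans hr.2) 2)) hr.1 hroot hxN.1.le).2 hx.1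
  have hNx : 0 < N - x := sub_pos.2 hxN.2
  rw [(hasDerivAt_sisDensity hxN).deriv]
  exact mul_neg_of_pos_of_neg (sisDensity_pos hK hxN) (div_neg_of_neg_of_pos hq (mul_pos hxN.1 (pow_pos hNx 2)))

end Density

section Mode

variable {N R c : ℝ}

lemma sisQuadratic_sisMode (hc : 0 < c) (hR : 1 < R) :
    sisQuadratic N (c * (R - 1) + 1) c (sisMode N R c) = 0 := by
  have hs : √((4 + R * c) ^ 2 - 16 * c) ^ 2 = (4 + R * c) ^ 2 - 16 * c :=
    sq_sqrt (by nlinarith [sq_nonneg (4 - R * c), mul_pos hc (sub_pos.2 hR)])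
  rw [sisQuadratic, sisMode]
  linear_combination (-(N ^ 2 / 16)) * hs

lemma sisMode_mem_Ioo (hN : 0 < N) (hc : 0 < c) (hR : 1 < R) : sisMode N R c ∈ Ioo 0 N := by
  have habs : |4 - R * c| < √((4 + R * c) ^ 2 - 16 * c) := by
    rw [← sqrt_sq_eq_abs]
    exact sqrt_lt_sqrt (sq_nonneg _) (by nlinarith [mul_pos hc (sub_pos.2 hR)])
  have hpos : 0 < sisMode N R c := by
    have : 0 < 4 - R * c + √((4 + R * c) ^ 2 - 16 * c) := by linarith [neg_abs_le (4 - R * c)]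
    unfold sisMode
    positivity
  refine ⟨hpos, (neg_quadratic_neg_iff four_pos ?_ hpos (sisQuadratic_sisMode hc hR) hN.le).1 ?_⟩
  · exact mul_pos (by linarith [mul_pos hc (sub_pos.2 hR)]) (pow_pos hN 2)
  · nlinarith [mul_pos hc (pow_pos hN 2)]

end Mode

theorem profile_R0P_gt_one_general
    (N β μ γ σ : ℝ) (hN : 0 < N) (hμ : 0 < μ) (hγ : 0 < γ) (hσ : 0 < σ)
    (R0S R0P c0 C : ℝ)
    (hR0S : R0S = β * N / (μ + γ) - σ ^ 2 * N ^ 2 / (2 * (μ + γ)))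
    (hR0P : R0P = (β * N - σ ^ 2 * N ^ 2) / (μ + γ))
    (hc0 : c0 = 2 * (μ + γ) / (σ ^ 2 * N ^ 2))
    (hP : 1 < R0P)
    (hCpos : 0 < C)
    (p : ℝ → ℝ)
    (hp : ∀ x, p x = C * N ^ 3 * x ^ (c0 * (R0S - 1) - 1) *
      (N - x) ^ (-(c0 * (R0S - 1) + 3)) * Real.exp (-c0 * x / (N - x)))
    (Istarσ : ℝ)
    (hIstarσ : Istarσ = N / 8 * ((4 - R0P * c0) + Real.sqrt ((4 + R0P * c0) ^ 2 - 16 * c0))) :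
    Tendsto p (𝓝[>] (0:ℝ)) (𝓝 0) ∧
    StrictMonoOn p (Set.Ioo 0 Istarσ) ∧
    StrictAntiOn p (Set.Ioo Istarσ N) ∧
    ∀ x ∈ Set.Ioo (0:ℝ) N, p x ≤ p Istarσ := by
  have hμγ : 0 < μ + γ := add_pos hμ hγ
  have hσN : σ ^ 2 * N ^ 2 ≠ 0 := by positivity
  have hc0pos : 0 < c0 := by rw [hc0]; positivity
  have ha : c0 * (R0S - 1) = c0 * (R0P - 1) + 1 := by
    rw [hR0S, hR0P, hc0]
    field_simp
    ring
  have ha1 : 1 < c0 * (R0P - 1) + 1 := lt_add_of_pos_left 1 (mul_pos hc0pos (sub_pos.2 hP))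
  have hK : 0 < C * N ^ 3 := by positivity
  have hroot : sisQuadratic N (c0 * (R0P - 1) + 1) c0 Istarσ = 0 :=
    hIstarσ ▸ sisQuadratic_sisMode hc0pos hP
  have hI : Istarσ ∈ Ioo 0 N := hIstarσ ▸ sisMode_mem_Ioo hN hc0pos hP
  have hmono := strictMonoOn_sisDensity hK ha1 hI hroot
  have hanti := strictAntiOn_sisDensity hK ha1 hI hroot
  obtain rfl : p = sisDensity (C * N ^ 3) N (c0 * (R0P - 1) + 1) c0 := by
    rw [← ha]
    exact funext hp
  refine ⟨tendsto_sisDensity_nhdsGT_zero hN.ne' ha1, hmono.mono Ioo_subset_Ioc_self,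
    hanti.mono Ioo_subset_Ico_self, fun x hx => ?_⟩
  rcases le_total x Istarσ with hxI | hxI
  · exact hmono.monotoneOn ⟨hx.1, hxI⟩ ⟨hI.1, le_rfl⟩ hxI
  · exact hanti.antitoneOn ⟨le_rfl, hI.2⟩ ⟨hxI, hx.2⟩ hxI

/-- profile of the invariant density when `R₀ᴾ > 1`. -/
theorem profile_R0P_gt_one
    (N β μ γ σ : ℝ) (hN : 0 < N) (hβ : 0 < β) (hμ : 0 < μ) (hγ : 0 < γ) (hσ : 0 < σ)
    (R0S R0P c0 C : ℝ)
    (hR0S : R0S = β * N / (μ + γ) - σ ^ 2 * N ^ 2 / (2 * (μ + γ)))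
    (hR0P : R0P = (β * N - σ ^ 2 * N ^ 2) / (μ + γ))
    (hc0 : c0 = 2 * (μ + γ) / (σ ^ 2 * N ^ 2))
    (hP : 1 < R0P)
    (hCpos : 0 < C)
    (hC : C⁻¹ = c0 ^ (-(c0 * (R0S - 1))) * (R0S ^ 2 + c0⁻¹ * (R0S - 1)) *
      Real.Gamma (c0 * (R0S - 1)))
    (p : ℝ → ℝ)
    (hp : ∀ x, p x = C * N ^ 3 * x ^ (c0 * (R0S - 1) - 1) *
      (N - x) ^ (-(c0 * (R0S - 1) + 3)) * Real.exp (-c0 * x / (N - x)))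
    (Istarσ : ℝ)
    (hIstarσ : Istarσ = N / 8 * ((4 - R0P * c0) + Real.sqrt ((4 + R0P * c0) ^ 2 - 16 * c0))) :
    Tendsto p (𝓝[>] (0:ℝ)) (𝓝 0) ∧
    StrictMonoOn p (Set.Ioo 0 Istarσ) ∧
    StrictAntiOn p (Set.Ioo Istarσ N) ∧
    ∀ x ∈ Set.Ioo (0:ℝ) N, p x ≤ p Istarσ :=
  profile_R0P_gt_one_general N β μ γ σ hN hμ hγ hσ R0S R0P c0 C hR0S hR0P hc0 hP hCpos p hp Istarσ
    hIstarσ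
end

section
/- Disease prevalence comparison: assume R₀ᴾ > 1. Then (1) if R₀ᴰ < 2 then I_*(σ)/N < I^*/N; (2) if R₀ᴰ = 2 then I_*(σ)/N = I^*/N; (3) if R₀ᴰ > 2 then I_*(σ)/N > I^*/N. Here I_*(σ)/N is the stochastic disease prevalence and I^*/N the deterministic disease prevalence. -/
/-!
With `a = μ + γ`, `s = σ²N²` and `b = βN`, the two prevalences are
`I_*(σ)/N = (3s - b + √((b + s)² - 8as)) / (4s)` and `I^*/N = (b - a)/b`, and the hypothesis
`R₀ᴾ > 1` reads `a + s < b`. Clearing denominators, the comparison becomes one between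
`b √((b + s)² - 8as)` and the positive number `b² + bs - 4as`, and comparing squares,
`b² ((b + s)² - 8as) - (b² + bs - 4as)² = 8as² (b - 2a)`, so the sign is that of `R₀ᴰ - 2`.
-/

open Real

noncomputable def stochasticPrevalence (a s b : ℝ) : ℝ :=
  (3 * s - b + √((b + s) ^ 2 - 8 * a * s)) / (4 * s)

noncomputable def deterministicPrevalence (a b : ℝ) : ℝ :=
  (b - a) / b

section Comparison

variable {a s b : ℝ}

lemma stochasticPrevalence_sub_deterministicPrevalence (hs : 0 < s) (hb : 0 < b) :
    stochasticPrevalence a s b - deterministicPrevalence a b =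
      (√(b ^ 2 * ((b + s) ^ 2 - 8 * a * s)) - (b ^ 2 + b * s - 4 * a * s)) / (4 * s * b) := by
  rw [stochasticPrevalence, deterministicPrevalence, sqrt_mul (sq_nonneg b), sqrt_sq hb.le]
  field_simp
  ring

lemma comparison_polynomial_pos (ha : 0 < a) (hs : 0 < s) (hbas : a + s < b) :
    0 < b ^ 2 + b * s - 4 * a * s := by
  nlinarith [mul_pos (sub_pos.2 hbas) (by linarith : 0 < b + a + 2 * s), sq_nonneg (2 * a - s)]

lemma comparison_polynomial_sq :
    b ^ 2 * ((b + s) ^ 2 - 8 * a * s) - (b ^ 2 + b * s - 4 * a * s) ^ 2 =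
      8 * a * s ^ 2 * (b - 2 * a) := by
  ring

lemma stochasticPrevalence_lt_deterministicPrevalence_iff (ha : 0 < a) (hs : 0 < s)
    (hbas : a + s < b) :
    stochasticPrevalence a s b < deterministicPrevalence a b ↔ b < 2 * a := by
  have hb : 0 < b := by linarith
  have hp := comparison_polynomial_pos ha hs hbas
  have has2 : 0 < 8 * a * s ^ 2 := by positivity
  rw [← sub_neg, stochasticPrevalence_sub_deterministicPrevalence hs hb,
    div_lt_iff₀ (by positivity), zero_mul, sub_neg, sqrt_lt' hp, ← sub_neg,
    comparison_polynomial_sq, ← smul_eq_mul, smul_neg_iff_of_pos_left has2, sub_neg]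

lemma deterministicPrevalence_lt_stochasticPrevalence_iff (ha : 0 < a) (hs : 0 < s)
    (hbas : a + s < b) :
    deterministicPrevalence a b < stochasticPrevalence a s b ↔ 2 * a < b := by
  have hb : 0 < b := by linarith
  have hp := comparison_polynomial_pos ha hs hbas
  have has2 : 0 < 8 * a * s ^ 2 := by positivity
  rw [← sub_pos, stochasticPrevalence_sub_deterministicPrevalence hs hb,
    div_pos_iff_of_pos_right (by positivity), sub_pos, lt_sqrt hp.le, ← sub_pos,
    comparison_polynomial_sq, mul_pos_iff_of_pos_left has2, sub_pos]

lemma stochasticPrevalence_eq_deterministicPrevalence (ha : 0 < a) (hs : 0 < s)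
    (hbas : a + s < b) (hb2a : b = 2 * a) :
    stochasticPrevalence a s b = deterministicPrevalence a b :=
  le_antisymm
    (not_lt.1 fun h => hb2a.not_gt
      ((deterministicPrevalence_lt_stochasticPrevalence_iff ha hs hbas).1 h))
    (not_lt.1 fun h => hb2a.not_lt
      ((stochasticPrevalence_lt_deterministicPrevalence_iff ha hs hbas).1 h))

end Comparison

lemma stochasticPrevalence_eq_of_basicReproductionNumbers {N a s b : ℝ} (hN : N ≠ 0) (ha : a ≠ 0)
    (hs : 0 < s) :
    N / 8 * ((4 - (b - s) / a * (2 * a / s)) +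
        √((4 + (b - s) / a * (2 * a / s)) ^ 2 - 16 * (2 * a / s))) / N =
      stochasticPrevalence a s b := by
  have hdisc : (4 + (b - s) / a * (2 * a / s)) ^ 2 - 16 * (2 * a / s) =
      (2 / s) ^ 2 * ((b + s) ^ 2 - 8 * a * s) := by
    field_simp
    ring
  rw [hdisc, sqrt_mul (sq_nonneg _), sqrt_sq (by positivity), stochasticPrevalence]
  field_simp
  ring

theorem disease_prevalence_comparison_general
    (N β μ γ σ : ℝ) (hN : 0 < N) (hμ : 0 < μ) (hγ : 0 < γ) (hσ : 0 < σ)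
    (R0D R0P c0 : ℝ)
    (hR0D : R0D = β * N / (μ + γ))
    (hR0P : R0P = (β * N - σ ^ 2 * N ^ 2) / (μ + γ))
    (hc0 : c0 = 2 * (μ + γ) / (σ ^ 2 * N ^ 2))
    (hP : 1 < R0P)
    (Istarσ Istar : ℝ)
    (hIstarσ : Istarσ = N / 8 * ((4 - R0P * c0) + Real.sqrt ((4 + R0P * c0) ^ 2 - 16 * c0)))
    (hIstar : Istar = (1 - 1 / R0D) * N) :
    (R0D < 2 → Istarσ / N < Istar / N) ∧
    (R0D = 2 → Istarσ / N = Istar / N) ∧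
    (2 < R0D → Istar / N < Istarσ / N) := by
  have ha : 0 < μ + γ := by positivity
  have hs : 0 < σ ^ 2 * N ^ 2 := by positivity
  have hbas : μ + γ + σ ^ 2 * N ^ 2 < β * N := by
    rw [hR0P, lt_div_iff₀ ha] at hP
    linarith
  have hstoch : Istarσ / N = stochasticPrevalence (μ + γ) (σ ^ 2 * N ^ 2) (β * N) := by
    rw [hIstarσ, hR0P, hc0]
    exact stochasticPrevalence_eq_of_basicReproductionNumbers hN.ne' ha.ne' hs
  have hb : β * N ≠ 0 := by linarith
  have hdet : Istar / N = deterministicPrevalence (μ + γ) (β * N) := by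
    rw [hIstar, hR0D, deterministicPrevalence, one_div_div, mul_div_cancel_right₀ _ hN.ne',
      sub_div' hb, one_mul]
  rw [hstoch, hdet, hR0D, div_lt_iff₀ ha, lt_div_iff₀ ha, div_eq_iff ha.ne']
  exact ⟨(stochasticPrevalence_lt_deterministicPrevalence_iff ha hs hbas).2,
    stochasticPrevalence_eq_deterministicPrevalence ha hs hbas,
    (deterministicPrevalence_lt_stochasticPrevalence_iff ha hs hbas).2⟩

/-- comparison of the stochastic and deterministic disease prevalences. -/
theorem disease_prevalence_comparison
    (N β μ γ σ : ℝ) (hN : 0 < N) (hβ : 0 < β) (hμ : 0 < μ) (hγ : 0 < γ) (hσ : 0 < σ)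
    (R0D R0P c0 : ℝ)
    (hR0D : R0D = β * N / (μ + γ))
    (hR0P : R0P = (β * N - σ ^ 2 * N ^ 2) / (μ + γ))
    (hc0 : c0 = 2 * (μ + γ) / (σ ^ 2 * N ^ 2))
    (hP : 1 < R0P)
    (Istarσ Istar : ℝ)
    (hIstarσ : Istarσ = N / 8 * ((4 - R0P * c0) + Real.sqrt ((4 + R0P * c0) ^ 2 - 16 * c0)))
    (hIstar : Istar = (1 - 1 / R0D) * N) :
    (R0D < 2 → Istarσ / N < Istar / N) ∧
    (R0D = 2 → Istarσ / N = Istar / N) ∧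
    (2 < R0D → Istar / N < Istarσ / N) :=
  disease_prevalence_comparison_general N β μ γ σ hN hμ hγ hσ R0D R0P c0 hR0D hR0P hc0 hP Istarσ
    Istar hIstarσ hIstar
end

section
/- Comparison of the mode I_*(σ) with the persistence level Ĩ_*(σ): assume R₀ᴾ > 1. Then (a) Ĩ_*(σ) > I_*(σ) if (10/3)c₀⁻¹ < R₀ᴰ < 3/2 + (2/3)c₀⁻¹; (b) Ĩ_*(σ) = I_*(σ) if R₀ᴰ = 3/2 + (2/3)c₀⁻¹; (c) Ĩ_*(σ) < I_*(σ) if 1 + 2c₀⁻¹ < R₀ᴰ ≤ (10/3)c₀⁻¹. -/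
/-!
With `m = μ + γ`, `a = βN` and `b = σ²N²`, the difference `Ĩ_* - I_*` is a positive multiple of
`4√(a² - 2bm) - (√((a + b)² - 8bm) + 3a - b)`. Squaring twice, each time comparing two
nonnegative quantities, shows that this has the sign of `9m + 2b - 6a`, that is, of
`3/2 + (2/3)c₀⁻¹ - R₀ᴰ`. In case (c) the two bounds on `R₀ᴰ` force `c₀⁻¹ > 3/4`, which puts
`R₀ᴰ` above this threshold.
-/

open Real

theorem sign_mul_of_pos {R : Type*} [Ring R] [LinearOrder R] [IsStrictOrderedRing R]
    {c : R} (x : R) (hc : 0 < c) : SignType.sign (c * x) = SignType.sign x := by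
  rw [sign_mul, sign_pos hc, one_mul]

theorem sign_sq_sub_sq {R : Type*} [CommRing R] [LinearOrder R] [IsStrictOrderedRing R]
    {u v : R} (h : 0 < u + v) : SignType.sign (u ^ 2 - v ^ 2) = SignType.sign (u - v) := by
  rw [sq_sub_sq, sign_mul_of_pos _ h]

theorem sign_four_sqrt_sub {a b m : ℝ} (hm : 0 < m) (hb : 0 < b) (hab : b + m < a) :
    SignType.sign (4 * √(a ^ 2 - 2 * b * m) - (√((a + b) ^ 2 - 8 * m * b) + 3 * a - b)) =
      SignType.sign (9 * m + 2 * b - 6 * a) := by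
  set X := √(a ^ 2 - 2 * b * m)
  set Y := √((a + b) ^ 2 - 8 * m * b)
  have hX : X ^ 2 = a ^ 2 - 2 * b * m := sq_sqrt (by nlinarith)
  have hY : Y ^ 2 = (a + b) ^ 2 - 8 * m * b := sq_sqrt (by nlinarith [sq_nonneg (2 * b - m)])
  have hX0 : 0 ≤ X := sqrt_nonneg _
  have hY0 : 0 ≤ Y := sqrt_nonneg _
  have h3ab : 0 < 3 * a - b := by linarith
  have hR : 0 < (3 * a - b) * (a + b) - 12 * m * b := by
    nlinarith [mul_lt_mul'' (show 2 * b + 3 * m < 3 * a - b by linarith)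
      (show 2 * b + m < a + b by linarith) (by positivity) (by positivity), sq_nonneg (2 * b - m)]
  calc SignType.sign (4 * X - (Y + 3 * a - b))
      = SignType.sign ((4 * X) ^ 2 - (Y + 3 * a - b) ^ 2) :=
        (sign_sq_sub_sq (by linarith)).symm
    _ = SignType.sign (2 * ((3 * a - b) * (a + b) - 12 * m * b - (3 * a - b) * Y)) := by
        congr 1; linear_combination 16 * hX - hY
    _ = SignType.sign (((3 * a - b) * (a + b) - 12 * m * b) ^ 2 - ((3 * a - b) * Y) ^ 2) := by
        rw [sign_mul_of_pos _ two_pos, sign_sq_sub_sq (by nlinarith)]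
    _ = SignType.sign (16 * m * b ^ 2 * (9 * m + 2 * b - 6 * a)) := by
        congr 1; linear_combination -(3 * a - b) ^ 2 * hY
    _ = SignType.sign (9 * m + 2 * b - 6 * a) := sign_mul_of_pos _ (by positivity)

theorem mode_eq {N a b m R c : ℝ} (hb : 0 < b) (hm : m ≠ 0)
    (hR : R = (a - b) / m) (hc : c = 2 * m / b) :
    N / 8 * ((4 - R * c) + √((4 + R * c) ^ 2 - 16 * c)) =
      N / (4 * b) * (3 * b - a + √((a + b) ^ 2 - 8 * m * b)) := by
  have hdisc : (4 + R * c) ^ 2 - 16 * c = (2 / b) ^ 2 * ((a + b) ^ 2 - 8 * m * b) := by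
    rw [hR, hc]; field_simp; ring
  rw [hdisc, sqrt_mul (by positivity), sqrt_sq (by positivity), hR, hc]
  field_simp; ring

theorem persistence_level_eq {N β σ m : ℝ} (hN : 0 < N) (hσ : σ ≠ 0) :
    1 / σ ^ 2 * (√(β ^ 2 - 2 * σ ^ 2 * m) - (β - σ ^ 2 * N)) =
      N / (σ ^ 2 * N ^ 2) * (√((β * N) ^ 2 - 2 * (σ ^ 2 * N ^ 2) * m) - β * N + σ ^ 2 * N ^ 2) := by
  have : (β * N) ^ 2 - 2 * (σ ^ 2 * N ^ 2) * m = N ^ 2 * (β ^ 2 - 2 * σ ^ 2 * m) := by ring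
  rw [this, sqrt_mul (by positivity), sqrt_sq hN.le]
  field_simp; ring

theorem mode_vs_persistence_level_general
    (N β μ γ σ : ℝ) (hN : 0 < N) (hμ : 0 < μ) (hγ : 0 < γ) (hσ : 0 < σ)
    (R0D R0P c0 : ℝ)
    (hR0D : R0D = β * N / (μ + γ))
    (hR0P : R0P = (β * N - σ ^ 2 * N ^ 2) / (μ + γ))
    (hc0 : c0 = 2 * (μ + γ) / (σ ^ 2 * N ^ 2))
    (hP : 1 < R0P)
    (Istarσ Itildeσ : ℝ)
    (hIstarσ : Istarσ = N / 8 * ((4 - R0P * c0) + Real.sqrt ((4 + R0P * c0) ^ 2 - 16 * c0)))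
    (hItildeσ : Itildeσ = (1 / σ ^ 2) *
      (Real.sqrt (β ^ 2 - 2 * σ ^ 2 * (μ + γ)) - (β - σ ^ 2 * N))) :
    ((10 / 3) * c0⁻¹ < R0D ∧ R0D < 3 / 2 + (2 / 3) * c0⁻¹ → Istarσ < Itildeσ) ∧
    (R0D = 3 / 2 + (2 / 3) * c0⁻¹ → Itildeσ = Istarσ) ∧
    (1 + 2 * c0⁻¹ < R0D ∧ R0D ≤ (10 / 3) * c0⁻¹ → Itildeσ < Istarσ) := by
  rw [persistence_level_eq hN hσ.ne'] at hItildeσ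
  set m := μ + γ
  set a := β * N
  set b := σ ^ 2 * N ^ 2
  have hm : 0 < m := add_pos hμ hγ
  have hb : 0 < b := by positivity
  have hab : b + m < a := by rw [hR0P, lt_div_iff₀ hm] at hP; linarith
  rw [mode_eq hb hm.ne' hR0P hc0] at hIstarσ
  have hsign : SignType.sign (Itildeσ - Istarσ) = SignType.sign (3 / 2 + 2 / 3 * c0⁻¹ - R0D) :=
    calc SignType.sign (Itildeσ - Istarσ)
        = SignType.sign (N / (4 * b) *
            (4 * √(a ^ 2 - 2 * b * m) - (√((a + b) ^ 2 - 8 * m * b) + 3 * a - b))) := by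
          rw [hItildeσ, hIstarσ]; ring_nf
      _ = SignType.sign (9 * m + 2 * b - 6 * a) := by
          rw [sign_mul_of_pos _ (by positivity), sign_four_sqrt_sub hm hb hab]
      _ = SignType.sign (1 / (6 * m) * (9 * m + 2 * b - 6 * a)) :=
          (sign_mul_of_pos _ (by positivity)).symm
      _ = SignType.sign (3 / 2 + 2 / 3 * c0⁻¹ - R0D) := by
          rw [hc0, hR0D]; congr 1; field_simp; ring
  refine ⟨fun h => ?_, fun h => ?_, fun h => ?_⟩
  · exact sub_pos.mp (sign_eq_one_iff.mp (hsign.trans (sign_pos (sub_pos.mpr h.2))))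
  · exact sub_eq_zero.mp (sign_eq_zero_iff.mp (hsign.trans (by rw [h, sub_self, _root_.sign_zero])))
  · exact sub_neg.mp (sign_eq_neg_one_iff.mp (hsign.trans (sign_neg (by linarith))))

/-- comparison of the mode `I_*(σ)` with the persistence level `Ĩ_*(σ)`. -/
theorem mode_vs_persistence_level
    (N β μ γ σ : ℝ) (hN : 0 < N) (hβ : 0 < β) (hμ : 0 < μ) (hγ : 0 < γ) (hσ : 0 < σ)
    (R0D R0P c0 : ℝ)
    (hR0D : R0D = β * N / (μ + γ))
    (hR0P : R0P = (β * N - σ ^ 2 * N ^ 2) / (μ + γ))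
    (hc0 : c0 = 2 * (μ + γ) / (σ ^ 2 * N ^ 2))
    (hP : 1 < R0P)
    (Istarσ Itildeσ : ℝ)
    (hIstarσ : Istarσ = N / 8 * ((4 - R0P * c0) + Real.sqrt ((4 + R0P * c0) ^ 2 - 16 * c0)))
    (hItildeσ : Itildeσ = (1 / σ ^ 2) *
      (Real.sqrt (β ^ 2 - 2 * σ ^ 2 * (μ + γ)) - (β - σ ^ 2 * N))) :
    ((10 / 3) * c0⁻¹ < R0D ∧ R0D < 3 / 2 + (2 / 3) * c0⁻¹ → Istarσ < Itildeσ) ∧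
    (R0D = 3 / 2 + (2 / 3) * c0⁻¹ → Itildeσ = Istarσ) ∧
    (1 + 2 * c0⁻¹ < R0D ∧ R0D ≤ (10 / 3) * c0⁻¹ → Itildeσ < Istarσ) :=
  mode_vs_persistence_level_general N β μ γ σ hN hμ hγ hσ R0D R0P c0 hR0D hR0P hc0 hP Istarσ Itildeσ
    hIstarσ hItildeσ
end

section
/- Small-noise limits of the two persistence levels: fix N, β, μ, γ > 0 with R₀ᴰ = βN/(μ+γ) > 1. Then, as σ → 0⁺, both Ĩ_*(σ) → I^* and I_*(σ) → I^*, where I^* = (1 − 1/R₀ᴰ)N (note that R₀ᴾ > 1 holds for all sufficiently small σ > 0, so I_*(σ) and Ĩ_*(σ) are well defined there). -/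
/-!
With `t = σ²` and `κ = μ + γ`, both levels are, for `σ > 0`, affine in a difference quotient
at `t = 0` of the square root of a quadratic in `t`:
`Ĩ_* = N + (√(β² - 2κt) - β) / t` and `I_* = (N/8) (6 + (√((2t + a)² - bt) - a) / t)`
with `a = 2β/N`, `b = 32κ/N²`. As `σ → 0⁺` the quotients tend to the derivatives `-κ/β` and
`2 - 8κ/(βN)`, so both levels tend to `N - κ/β = (1 - 1/R₀ᴰ) N`.
-/

open Real Filter Topology

/-- `Ĩ_*(σ)`, with `κ = μ + γ`. -/
noncomputable def persistenceLevelTilde (N β κ σ : ℝ) : ℝ :=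
  (1 / σ ^ 2) * (√(β ^ 2 - 2 * σ ^ 2 * κ) - (β - σ ^ 2 * N))

/-- `I_*(σ)`, with `κ = μ + γ` and `R₀ᴾ`, `c₀` unfolded. -/
noncomputable def persistenceLevel (N β κ σ : ℝ) : ℝ :=
  N / 8 * ((4 - ((β * N - σ ^ 2 * N ^ 2) / κ) * (2 * κ / (σ ^ 2 * N ^ 2))) +
    √((4 + ((β * N - σ ^ 2 * N ^ 2) / κ) * (2 * κ / (σ ^ 2 * N ^ 2))) ^ 2 -
      16 * (2 * κ / (σ ^ 2 * N ^ 2))))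

theorem tendsto_sq_nhdsGT_zero : Tendsto (fun σ : ℝ => σ ^ 2) (𝓝[>] 0) (𝓝[>] 0) := by
  refine tendsto_nhdsWithin_of_tendsto_nhds_of_eventually_within _ ?_ ?_
  · simpa using ((continuous_pow 2).tendsto (0 : ℝ)).mono_left nhdsWithin_le_nhds
  · filter_upwards [self_mem_nhdsWithin] with σ (hσ : 0 < σ) using pow_pos hσ 2

theorem HasDerivAt.tendsto_slope_sq {f : ℝ → ℝ} {f' x : ℝ} (hf : HasDerivAt f f' x) :
    Tendsto (fun σ : ℝ => (f (x + σ ^ 2) - f x) / σ ^ 2) (𝓝[>] 0) (𝓝 f') := by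
  have := hf.tendsto_slope_zero_right.comp tendsto_sq_nhdsGT_zero
  simpa only [Function.comp_def, smul_eq_mul, inv_mul_eq_div] using this

theorem tendsto_persistenceLevelTilde {N β κ : ℝ} (hβ : 0 < β) :
    Tendsto (persistenceLevelTilde N β κ) (𝓝[>] 0) (𝓝 (N - κ / β)) := by
  have hβsq : √(β ^ 2) = β := sqrt_sq hβ.le
  have hrad : HasDerivAt (fun t => β ^ 2 - 2 * t * κ) (-2 * κ) 0 := by
    simpa using (((hasDerivAt_id' 0).const_mul 2).mul_const κ).const_sub (β ^ 2)
  have hderiv : HasDerivAt (fun t => √(β ^ 2 - 2 * t * κ)) (-(κ / β)) 0 := by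
    convert hrad.sqrt (by simpa using hβ.ne') using 1
    simp only [mul_zero, zero_mul, sub_zero, hβsq]
    field_simp
  have hlim := hderiv.tendsto_slope_sq.const_add N
  rw [← sub_eq_add_neg] at hlim
  refine hlim.congr' ?_
  filter_upwards [self_mem_nhdsWithin] with σ (hσ : 0 < σ)
  simp only [persistenceLevelTilde, zero_add, mul_zero, zero_mul, sub_zero, hβsq]
  field_simp
  ring

theorem persistenceLevel_eq_slope {N β κ σ : ℝ} (hN : N ≠ 0) (hκ : κ ≠ 0) (hσ : 0 < σ) :
    persistenceLevel N β κ σ = N / 8 * (6 +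
      (√((2 * σ ^ 2 + 2 * β / N) ^ 2 - 32 * κ / N ^ 2 * σ ^ 2) - 2 * β / N) / σ ^ 2) := by
  have hσ2 : 0 < σ ^ 2 := by positivity
  have hrad : (4 + ((β * N - σ ^ 2 * N ^ 2) / κ) * (2 * κ / (σ ^ 2 * N ^ 2))) ^ 2 -
      16 * (2 * κ / (σ ^ 2 * N ^ 2)) =
      ((2 * σ ^ 2 + 2 * β / N) ^ 2 - 32 * κ / N ^ 2 * σ ^ 2) / (σ ^ 2) ^ 2 := by
    field_simp
    ring
  rw [persistenceLevel, hrad, sqrt_div' _ (by positivity), sqrt_sq hσ2.le]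
  field_simp
  ring

theorem tendsto_persistenceLevel {N β κ : ℝ} (hN : 0 < N) (hβ : 0 < β) (hκ : κ ≠ 0) :
    Tendsto (persistenceLevel N β κ) (𝓝[>] 0) (𝓝 (N - κ / β)) := by
  set a := 2 * β / N with ha
  set b := 32 * κ / N ^ 2 with hb
  have ha0 : 0 < a := by positivity
  have hasq : √(a ^ 2) = a := sqrt_sq ha0.le
  have hrad : HasDerivAt (fun t => (2 * t + a) ^ 2 - b * t) (4 * a - b) 0 := by
    refine ((((hasDerivAt_id' 0).const_mul 2).add_const a).fun_pow 2).fun_sub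
      ((hasDerivAt_id' 0).const_mul b) |>.congr_deriv ?_
    norm_num
    ring
  have hderiv : HasDerivAt (fun t => √((2 * t + a) ^ 2 - b * t)) ((4 * a - b) / (2 * a)) 0 := by
    convert hrad.sqrt (by simpa using ha0.ne') using 1
    simp only [mul_zero, zero_add, sub_zero, hasq]
  have hlim := (hderiv.tendsto_slope_sq.const_add 6).const_mul (N / 8)
  convert hlim.congr' ?_ using 2
  · rw [ha, hb]
    field_simp
    ring
  filter_upwards [self_mem_nhdsWithin] with σ (hσ : 0 < σ)
  rw [persistenceLevel_eq_slope hN.ne' hκ hσ]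
  simp only [zero_add, mul_zero, sub_zero, hasq]
  rfl

theorem small_noise_limits_of_persistence_levels_general
    (N β μ γ : ℝ) (hN : 0 < N) (hβ : 0 < β) (hμ : 0 < μ) (hγ : 0 < γ)
    (R0D : ℝ) (hR0D : R0D = β * N / (μ + γ))
    (Istar : ℝ) (hIstar : Istar = (1 - 1 / R0D) * N) :
    Tendsto (fun σ : ℝ => (1 / σ ^ 2) *
        (Real.sqrt (β ^ 2 - 2 * σ ^ 2 * (μ + γ)) - (β - σ ^ 2 * N)))
      (𝓝[>] 0) (𝓝 Istar) ∧
    Tendsto (fun σ : ℝ => N / 8 *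
        ((4 - ((β * N - σ ^ 2 * N ^ 2) / (μ + γ)) * (2 * (μ + γ) / (σ ^ 2 * N ^ 2))) +
          Real.sqrt ((4 + ((β * N - σ ^ 2 * N ^ 2) / (μ + γ)) *
            (2 * (μ + γ) / (σ ^ 2 * N ^ 2))) ^ 2 - 16 * (2 * (μ + γ) / (σ ^ 2 * N ^ 2)))))
      (𝓝[>] 0) (𝓝 Istar) := by
  have hκ : μ + γ ≠ 0 := by positivity
  have hIstar_eq : Istar = N - (μ + γ) / β := by
    rw [hIstar, hR0D]
    field_simp
  subst hIstar_eq
  exact ⟨tendsto_persistenceLevelTilde hβ, tendsto_persistenceLevel hN hβ hκ⟩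

/-- small-noise limits of the two persistence levels. -/
theorem small_noise_limits_of_persistence_levels
    (N β μ γ : ℝ) (hN : 0 < N) (hβ : 0 < β) (hμ : 0 < μ) (hγ : 0 < γ)
    (R0D : ℝ) (hR0D : R0D = β * N / (μ + γ)) (hR : 1 < R0D)
    (Istar : ℝ) (hIstar : Istar = (1 - 1 / R0D) * N) :
    Tendsto (fun σ : ℝ => (1 / σ ^ 2) *
        (Real.sqrt (β ^ 2 - 2 * σ ^ 2 * (μ + γ)) - (β - σ ^ 2 * N)))
      (𝓝[>] 0) (𝓝 Istar) ∧
    Tendsto (fun σ : ℝ => N / 8 *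
        ((4 - ((β * N - σ ^ 2 * N ^ 2) / (μ + γ)) * (2 * (μ + γ) / (σ ^ 2 * N ^ 2))) +
          Real.sqrt ((4 + ((β * N - σ ^ 2 * N ^ 2) / (μ + γ)) *
            (2 * (μ + γ) / (σ ^ 2 * N ^ 2))) ^ 2 - 16 * (2 * (μ + γ) / (σ ^ 2 * N ^ 2)))))
      (𝓝[>] 0) (𝓝 Istar) :=
  small_noise_limits_of_persistence_levels_general N β μ γ hN hβ hμ hγ R0D hR0D Istar hIstar
end

section
/- Concentration of the invariant density as the noise vanishes (Limit Stochastic Threshold Theorem, endemic case): fix N, β, μ, γ > 0 with R₀ᴰ = βN/(μ+γ) > 1, and let 0 < ε < min(I^*, N − I^*). Then ∫_{I^*−ε}^{I^*+ε} p_σ^s(x) dx → 1 as σ → 0⁺ (for all sufficiently small σ > 0 one has R₀ˢ > 1, so the density p_σ^s is defined). -/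
open Real MeasureTheory Filter Set Topology

/-!
Under the odds substitution `y = x / (N - x)` the invariant density becomes
`C (1 + y)² y^(a-1) e^(-c y)` with `c = c₀`, `θ = R₀ˢ - 1` and `a = c θ`: a combination of the
Gamma kernels of shapes `a`, `a + 1`, `a + 2`, whose total mass is exactly `1 / C`. These kernels
have means `θ + k / c` and variances `(a + k) / c²`, so by Chebyshev's inequality the normalized
mass outside a fixed window around `θ` is `O(1 / c)`. As `σ → 0⁺` we have `c₀ → ∞` and
`θ → R₀ᴰ - 1 = I^* / (N - I^*)`, the odds of `I^*`.
-/

noncomputable def gammaKernel (c s y : ℝ) : ℝ := y ^ (s - 1) * exp (-(c * y))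

section GammaKernel

variable {c s : ℝ}

lemma gammaKernel_add_one {y : ℝ} (hy : 0 < y) (c s : ℝ) :
    gammaKernel c (s + 1) y = y * gammaKernel c s y := by
  rw [gammaKernel, gammaKernel, add_sub_right_comm, rpow_add_one hy.ne']
  ring

lemma integrableOn_gammaKernel (hs : 0 < s) (hc : 0 < c) :
    IntegrableOn (gammaKernel c s) (Ioi 0) := by
  have := integrableOn_rpow_mul_exp_neg_mul_rpow (p := 1) (by linarith : -1 < s - 1) one_pos hc
  simp only [rpow_one, neg_mul] at this
  exact this

lemma integral_gammaKernel (hs : 0 < s) (hc : 0 < c) :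
    ∫ y in Ioi 0, gammaKernel c s y = (1 / c) ^ s * Gamma s :=
  integral_rpow_mul_exp_neg_mul_Ioi hs hc

lemma integral_gammaKernel_pos (hs : 0 < s) (hc : 0 < c) :
    0 < ∫ y in Ioi 0, gammaKernel c s y := by
  rw [integral_gammaKernel hs hc]
  have := Gamma_pos_of_pos hs
  positivity

lemma integral_gammaKernel_add_one (hs : 0 < s) (hc : 0 < c) :
    ∫ y in Ioi 0, gammaKernel c (s + 1) y = s / c * ∫ y in Ioi 0, gammaKernel c s y := by
  rw [integral_gammaKernel (by linarith) hc, integral_gammaKernel hs hc,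
    rpow_add (by positivity), Gamma_add_one hs.ne', rpow_one]
  field_simp

lemma sq_sub_mul_gammaKernel {y : ℝ} (hy : 0 < y) (c s θ : ℝ) :
    (y - θ) ^ 2 * gammaKernel c s y =
      gammaKernel c (s + 1 + 1) y - 2 * θ * gammaKernel c (s + 1) y +
        θ ^ 2 * gammaKernel c s y := by
  rw [gammaKernel_add_one hy, gammaKernel_add_one hy]
  ring

lemma integrableOn_sq_sub_mul_gammaKernel (hs : 0 < s) (hc : 0 < c) (θ : ℝ) :
    IntegrableOn (fun y => (y - θ) ^ 2 * gammaKernel c s y) (Ioi 0) := by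
  refine IntegrableOn.congr_fun ?_ (fun y hy => (sq_sub_mul_gammaKernel hy c s θ).symm)
    measurableSet_Ioi
  exact ((integrableOn_gammaKernel (by linarith) hc).sub
    ((integrableOn_gammaKernel (by linarith) hc).const_mul _)).add
    ((integrableOn_gammaKernel hs hc).const_mul _)

lemma integral_sq_sub_mul_gammaKernel (hs : 0 < s) (hc : 0 < c) (θ : ℝ) :
    ∫ y in Ioi 0, (y - θ) ^ 2 * gammaKernel c s y =
      (s / c ^ 2 + (s / c - θ) ^ 2) * ∫ y in Ioi 0, gammaKernel c s y := by
  have hs₁ : 0 < s + 1 := by linarith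
  have h₂ := integrableOn_gammaKernel (by linarith : 0 < s + 1 + 1) hc
  have h₁ := (integrableOn_gammaKernel hs₁ hc).const_mul (2 * θ)
  have h₀ := (integrableOn_gammaKernel hs hc).const_mul (θ ^ 2)
  rw [setIntegral_congr_fun measurableSet_Ioi (fun y hy => sq_sub_mul_gammaKernel hy c s θ),
    integral_add (f := fun y => gammaKernel c (s + 1 + 1) y - 2 * θ * gammaKernel c (s + 1) y)
      (h₂.sub h₁) h₀, integral_sub h₂ h₁, integral_const_mul, integral_const_mul,
    integral_gammaKernel_add_one hs₁ hc, integral_gammaKernel_add_one hs hc]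
  field_simp
  ring

end GammaKernel

/-- The density of the odds `x / (N - x)` under the invariant law, up to normalization. -/
noncomputable def oddsKernel (c a y : ℝ) : ℝ := (1 + y) ^ 2 * gammaKernel c a y

section OddsKernel

variable {c a : ℝ}

lemma oddsKernel_eq {y : ℝ} (hy : 0 < y) (c a : ℝ) :
    oddsKernel c a y =
      gammaKernel c a y + 2 * gammaKernel c (a + 1) y + gammaKernel c (a + 1 + 1) y := by
  simp only [oddsKernel, gammaKernel_add_one hy]
  ring

lemma mul_oddsKernel_eq (φ : ℝ → ℝ) {y : ℝ} (hy : 0 < y) (c a : ℝ) :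
    φ y * oddsKernel c a y = φ y * gammaKernel c a y + 2 * (φ y * gammaKernel c (a + 1) y) +
      φ y * gammaKernel c (a + 1 + 1) y := by
  rw [oddsKernel_eq hy]
  ring

variable {φ : ℝ → ℝ}

lemma integrableOn_mul_oddsKernel
    (h₀ : IntegrableOn (fun y => φ y * gammaKernel c a y) (Ioi 0))
    (h₁ : IntegrableOn (fun y => φ y * gammaKernel c (a + 1) y) (Ioi 0))
    (h₂ : IntegrableOn (fun y => φ y * gammaKernel c (a + 1 + 1) y) (Ioi 0)) :
    IntegrableOn (fun y => φ y * oddsKernel c a y) (Ioi 0) :=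
  ((h₀.add (h₁.const_mul 2)).add h₂).congr_fun (fun _ hy => (mul_oddsKernel_eq φ hy c a).symm)
    measurableSet_Ioi

lemma integral_mul_oddsKernel
    (h₀ : IntegrableOn (fun y => φ y * gammaKernel c a y) (Ioi 0))
    (h₁ : IntegrableOn (fun y => φ y * gammaKernel c (a + 1) y) (Ioi 0))
    (h₂ : IntegrableOn (fun y => φ y * gammaKernel c (a + 1 + 1) y) (Ioi 0)) :
    ∫ y in Ioi 0, φ y * oddsKernel c a y =
      (∫ y in Ioi 0, φ y * gammaKernel c a y) + 2 * (∫ y in Ioi 0, φ y * gammaKernel c (a + 1) y) +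
        ∫ y in Ioi 0, φ y * gammaKernel c (a + 1 + 1) y := by
  rw [setIntegral_congr_fun measurableSet_Ioi (fun y hy => mul_oddsKernel_eq φ hy c a),
    integral_add (f := fun y => φ y * gammaKernel c a y + 2 * (φ y * gammaKernel c (a + 1) y))
      (h₀.add (h₁.const_mul 2)) h₂,
    integral_add h₀ (h₁.const_mul 2), integral_const_mul]

lemma integrableOn_oddsKernel (ha : 0 < a) (hc : 0 < c) :
    IntegrableOn (oddsKernel c a) (Ioi 0) := by
  simpa only [one_mul] using integrableOn_mul_oddsKernel (φ := fun _ => 1)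
    (by simpa only [one_mul] using integrableOn_gammaKernel ha hc)
    (by simpa only [one_mul] using integrableOn_gammaKernel (by linarith : 0 < a + 1) hc)
    (by simpa only [one_mul] using integrableOn_gammaKernel (by linarith : 0 < a + 1 + 1) hc)

lemma integral_oddsKernel (ha : 0 < a) (hc : 0 < c) :
    ∫ y in Ioi 0, oddsKernel c a y =
      (1 + 2 * (a / c) + (a + 1) / c * (a / c)) * ∫ y in Ioi 0, gammaKernel c a y := by
  have key := integral_mul_oddsKernel (φ := fun _ => 1)
    (by simpa only [one_mul] using integrableOn_gammaKernel ha hc)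
    (by simpa only [one_mul] using integrableOn_gammaKernel (by linarith : 0 < a + 1) hc)
    (by simpa only [one_mul] using integrableOn_gammaKernel (by linarith : 0 < a + 1 + 1) hc)
  simp only [one_mul] at key
  rw [key, integral_gammaKernel_add_one (s := a + 1) (by linarith) hc,
    integral_gammaKernel_add_one ha hc]
  ring

lemma integral_oddsKernel_pos (ha : 0 < a) (hc : 0 < c) :
    0 < ∫ y in Ioi 0, oddsKernel c a y := by
  rw [integral_oddsKernel ha hc]
  have := integral_gammaKernel_pos ha hc
  positivity

lemma integrableOn_sq_sub_mul_oddsKernel (ha : 0 < a) (hc : 0 < c) (θ : ℝ) :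
    IntegrableOn (fun y => (y - θ) ^ 2 * oddsKernel c a y) (Ioi 0) :=
  integrableOn_mul_oddsKernel (integrableOn_sq_sub_mul_gammaKernel ha hc θ)
    (integrableOn_sq_sub_mul_gammaKernel (by linarith) hc θ)
    (integrableOn_sq_sub_mul_gammaKernel (by linarith) hc θ)

/-- The Gamma component of shape `c θ + k` has second moment `θ / c + (k + k ^ 2) / c ^ 2`
about `θ`, and `k ≤ 2`. -/
lemma integral_sq_sub_mul_oddsKernel_le {θ : ℝ} (hc : 0 < c) (hθ : 0 < θ) :
    ∫ y in Ioi 0, (y - θ) ^ 2 * oddsKernel c (c * θ) y ≤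
      (θ / c + 6 / c ^ 2) * ∫ y in Ioi 0, oddsKernel c (c * θ) y := by
  have ha : 0 < c * θ := by positivity
  have ha₁ : 0 < c * θ + 1 := by linarith
  rw [integral_mul_oddsKernel (integrableOn_sq_sub_mul_gammaKernel ha hc θ)
    (integrableOn_sq_sub_mul_gammaKernel ha₁ hc θ)
    (integrableOn_sq_sub_mul_gammaKernel (by linarith) hc θ),
    integral_sq_sub_mul_gammaKernel ha hc, integral_sq_sub_mul_gammaKernel ha₁ hc,
    integral_sq_sub_mul_gammaKernel (by linarith) hc, integral_oddsKernel ha hc,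
    integral_gammaKernel_add_one ha₁ hc, integral_gammaKernel_add_one ha hc]
  have hG := integral_gammaKernel_pos ha hc
  set G := ∫ y in Ioi 0, gammaKernel c (c * θ) y
  have gap : (θ / c + 6 / c ^ 2) * ((1 + 2 * (c * θ / c) + (c * θ + 1) / c * (c * θ / c)) * G) -
      (((c * θ) / c ^ 2 + ((c * θ) / c - θ) ^ 2) * G +
        2 * (((c * θ + 1) / c ^ 2 + ((c * θ + 1) / c - θ) ^ 2) * (c * θ / c * G)) +
        ((c * θ + 1 + 1) / c ^ 2 + ((c * θ + 1 + 1) / c - θ) ^ 2) *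
          ((c * θ + 1) / c * (c * θ / c * G))) = (6 + 8 * θ) / c ^ 2 * G := by
    field_simp
    ring
  have : 0 ≤ (6 + 8 * θ) / c ^ 2 * G := by positivity
  linarith

lemma Gamma_mul_eq_integral_oddsKernel {R : ℝ} (hc : 0 < c) (hR : 1 < R) :
    c ^ (-(c * (R - 1))) * (R ^ 2 + c⁻¹ * (R - 1)) * Gamma (c * (R - 1)) =
      ∫ y in Ioi 0, oddsKernel c (c * (R - 1)) y := by
  have ha : 0 < c * (R - 1) := mul_pos hc (by linarith)
  rw [integral_oddsKernel ha hc, integral_gammaKernel ha hc, one_div, inv_rpow hc.le,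
    ← rpow_neg hc.le]
  field_simp
  ring

end OddsKernel

lemma integral_sub_sq_moment_div_le_setIntegral {g : ℝ → ℝ} {s t : Set ℝ} {θ δ : ℝ}
    (hδ : 0 < δ) (hs : MeasurableSet s) (ht : MeasurableSet t) (hts : t ⊆ s)
    (hg : ∀ y ∈ s, 0 ≤ g y) (hgi : IntegrableOn g s)
    (hmi : IntegrableOn (fun y => (y - θ) ^ 2 * g y) s) (hfar : ∀ y ∈ s \ t, δ ≤ |y - θ|) :
    (∫ y in s, g y) - (∫ y in s, (y - θ) ^ 2 * g y) / δ ^ 2 ≤ ∫ y in t, g y := by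
  have hmi' : IntegrableOn (fun y => (y - θ) ^ 2 * g y / δ ^ 2) s := hmi.div_const _
  have hout : ∫ y in s \ t, g y ≤ (∫ y in s, (y - θ) ^ 2 * g y) / δ ^ 2 := calc
    ∫ y in s \ t, g y ≤ ∫ y in s \ t, (y - θ) ^ 2 * g y / δ ^ 2 := by
      refine setIntegral_mono_on (hgi.mono_set sdiff_subset) (hmi'.mono_set sdiff_subset)
        (hs.diff ht) (fun y hy => ?_)
      have hsq : δ ^ 2 ≤ (y - θ) ^ 2 := by
        simpa only [sq_abs] using pow_le_pow_left₀ hδ.le (hfar y hy) 2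
      rw [le_div_iff₀ (by positivity)]
      exact mul_le_mul_of_nonneg_right hsq (hg y hy.1) |>.trans_eq' (mul_comm _ _)
    _ ≤ ∫ y in s, (y - θ) ^ 2 * g y / δ ^ 2 :=
      setIntegral_mono_set hmi' ((ae_restrict_mem hs).mono fun y hy => by
        have := hg y hy
        positivity) sdiff_subset.eventuallyLE
    _ = (∫ y in s, (y - θ) ^ 2 * g y) / δ ^ 2 := integral_div _ _
  rw [setIntegral_sdiff ht hgi hts] at hout
  linarith

lemma integral_oddsKernel_window_div_mem {c θ δ y₁ y₂ : ℝ} (hc : 0 < c) (hθ : 0 < θ)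
    (hy₁ : 0 ≤ y₁) (hδ : 0 < δ) (h₁ : y₁ + δ ≤ θ) (h₂ : θ + δ ≤ y₂) :
    (∫ y in y₁..y₂, oddsKernel c (c * θ) y) / (∫ y in Ioi 0, oddsKernel c (c * θ) y) ∈
      Icc (1 - (θ / c + 6 / c ^ 2) / δ ^ 2) 1 := by
  have ha : 0 < c * θ := by positivity
  have hwin : Ioc y₁ y₂ ⊆ Ioi 0 := fun y hy => hy₁.trans_lt hy.1
  have hg : ∀ y ∈ Ioi (0 : ℝ), 0 ≤ oddsKernel c (c * θ) y := fun y (hy : 0 < y) => by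
    unfold oddsKernel gammaKernel
    positivity
  have hT := integral_oddsKernel_pos ha hc
  have hgi := integrableOn_oddsKernel ha hc
  rw [intervalIntegral.integral_of_le (by linarith), mem_Icc, le_div_iff₀ hT, div_le_one hT]
  constructor
  · have hfar : ∀ y ∈ Ioi 0 \ Ioc y₁ y₂, δ ≤ |y - θ| := fun y ⟨_, hy⟩ => by
      rcases le_or_gt y y₁ with h | h
      · rw [abs_sub_comm, abs_of_nonneg (by linarith)]; linarith
      · have : y₂ < y := lt_of_not_ge fun h' => hy ⟨h, h'⟩
        rw [abs_of_nonneg (by linarith)]; linarith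
    have cheb := integral_sub_sq_moment_div_le_setIntegral hδ measurableSet_Ioi measurableSet_Ioc
      hwin hg hgi (integrableOn_sq_sub_mul_oddsKernel ha hc θ) hfar
    have hm := integral_sq_sub_mul_oddsKernel_le hc hθ
    have : (∫ y in Ioi 0, (y - θ) ^ 2 * oddsKernel c (c * θ) y) / δ ^ 2 ≤
        (θ / c + 6 / c ^ 2) * (∫ y in Ioi 0, oddsKernel c (c * θ) y) / δ ^ 2 := by
      gcongr
    linarith [show (1 - (θ / c + 6 / c ^ 2) / δ ^ 2) * ∫ y in Ioi 0, oddsKernel c (c * θ) y =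
      (∫ y in Ioi 0, oddsKernel c (c * θ) y) -
        (θ / c + 6 / c ^ 2) * (∫ y in Ioi 0, oddsKernel c (c * θ) y) / δ ^ 2 by ring]
  · exact setIntegral_mono_set hgi ((ae_restrict_mem measurableSet_Ioi).mono hg)
      hwin.eventuallyLE

lemma tendsto_integral_oddsKernel_window_div {ι : Type*} {l : Filter ι} {c θ : ι → ℝ}
    {θ₀ y₁ y₂ : ℝ} (hc : Tendsto c l atTop) (hθ : Tendsto θ l (𝓝 θ₀)) (hy₁ : 0 ≤ y₁)
    (h₁ : y₁ < θ₀) (h₂ : θ₀ < y₂) :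
    Tendsto (fun i => (∫ y in y₁..y₂, oddsKernel (c i) (c i * θ i) y) /
      ∫ y in Ioi 0, oddsKernel (c i) (c i * θ i) y) l (𝓝 1) := by
  obtain ⟨δ, hδ, hδ₁, hδ₂⟩ : ∃ δ > 0, y₁ + 2 * δ ≤ θ₀ ∧ θ₀ + 2 * δ ≤ y₂ :=
    ⟨min (θ₀ - y₁) (y₂ - θ₀) / 2, half_pos (lt_min (sub_pos.2 h₁) (sub_pos.2 h₂)),
      by linarith [min_le_left (θ₀ - y₁) (y₂ - θ₀)], by linarith [min_le_right (θ₀ - y₁) (y₂ - θ₀)]⟩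
  have hlower : Tendsto (fun i => 1 - (θ i / c i + 6 / c i ^ 2) / δ ^ 2) l (𝓝 1) := by
    have hc2 : Tendsto (fun i => c i ^ 2) l atTop := (tendsto_pow_atTop two_ne_zero).comp hc
    simpa using ((hθ.div_atTop hc).add (tendsto_const_nhds.div_atTop hc2)).div_const (δ ^ 2)
      |>.const_sub 1
  have hbounds := (hc.eventually_gt_atTop 0).and
    (hθ.eventually (Ioo_mem_nhds (by linarith : θ₀ - δ < θ₀) (by linarith : θ₀ < θ₀ + δ)))
  have hmem : ∀ᶠ i in l, (∫ y in y₁..y₂, oddsKernel (c i) (c i * θ i) y) /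
      (∫ y in Ioi 0, oddsKernel (c i) (c i * θ i) y) ∈
        Icc (1 - (θ i / c i + 6 / c i ^ 2) / δ ^ 2) 1 :=
    hbounds.mono fun i ⟨hci, hθi₁, hθi₂⟩ =>
      integral_oddsKernel_window_div_mem hci (by linarith) hy₁ hδ (by linarith) (by linarith)
  exact tendsto_of_tendsto_of_tendsto_of_le_of_le' hlower tendsto_const_nhds
    (hmem.mono fun _ h => h.1) (hmem.mono fun _ h => h.2)

lemma oddsKernel_div_sub_mul {N c a x : ℝ} (hx : 0 < x) (hxN : x < N) :
    N / (N - x) ^ 2 * oddsKernel c a (x / (N - x)) =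
      N ^ 3 * x ^ (a - 1) * (N - x) ^ (-(a + 3)) * exp (-c * x / (N - x)) := by
  have hNx : 0 < N - x := by linarith
  have hpow : (N - x) ^ (-(a + 3)) = ((N - x) ^ (a - 1) * (N - x) ^ 4)⁻¹ := by
    rw [rpow_neg hNx.le, ← rpow_natCast, ← rpow_add hNx]
    congr 2
    push_cast
    ring
  rw [oddsKernel, gammaKernel, div_rpow hx.le hNx.le, hpow,
    show 1 + x / (N - x) = N / (N - x) by field_simp; ring,
    show -(c * (x / (N - x))) = -c * x / (N - x) by ring]
  have := rpow_pos_of_pos hNx (a - 1)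
  field_simp

lemma integral_comp_div_sub {N a c x₁ x₂ : ℝ} (hx₁ : 0 < x₁) (hx₁₂ : x₁ ≤ x₂) (hx₂ : x₂ < N) :
    ∫ x in x₁..x₂, N ^ 3 * x ^ (a - 1) * (N - x) ^ (-(a + 3)) * exp (-c * x / (N - x)) =
      ∫ y in (x₁ / (N - x₁))..(x₂ / (N - x₂)), oddsKernel c a y := by
  have hmem : ∀ x ∈ uIcc x₁ x₂, 0 < x ∧ x < N := fun x hx => by
    rw [uIcc_of_le hx₁₂] at hx
    exact ⟨hx₁.trans_le hx.1, hx.2.trans_lt hx₂⟩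
  have hderiv : ∀ x ∈ uIcc x₁ x₂, HasDerivAt (fun x => x / (N - x)) (N / (N - x) ^ 2) x :=
    fun x hx => by
      have hNx : N - x ≠ 0 := by linarith [hmem x hx]
      refine ((hasDerivAt_id x).div ((hasDerivAt_id x).const_sub N) hNx).congr_deriv ?_
      simp only [id]
      ring
  have hcont : ContinuousOn (fun x => N / (N - x) ^ 2) (uIcc x₁ x₂) :=
    continuousOn_const.div (by fun_prop) fun x hx => pow_ne_zero 2 (sub_pos.2 (hmem x hx).2).ne'
  have himage : (fun x => x / (N - x)) '' uIcc x₁ x₂ ⊆ Ioi 0 := by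
    rintro _ ⟨x, hx, rfl⟩
    exact div_pos (hmem x hx).1 (by linarith [hmem x hx])
  have hK : ContinuousOn (oddsKernel c a) (Ioi 0) := fun y (hy : 0 < y) => by
    unfold oddsKernel gammaKernel
    exact ((by fun_prop : Continuous fun y : ℝ => (1 + y) ^ 2).continuousAt.mul
      ((continuousAt_rpow_const y (a - 1) (Or.inl hy.ne')).mul
        (by fun_prop : Continuous fun y => exp (-(c * y))).continuousAt)).continuousWithinAt
  rw [← intervalIntegral.integral_deriv_smul_comp' hderiv hcont (hK.mono himage)]
  exact intervalIntegral.integral_congr fun x hx =>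
    (oddsKernel_div_sub_mul (hmem x hx).1 (hmem x hx).2).symm

noncomputable def invariantDensity (N c R x : ℝ) : ℝ :=
  (c ^ (-(c * (R - 1))) * (R ^ 2 + c⁻¹ * (R - 1)) * Gamma (c * (R - 1)))⁻¹ * N ^ 3 *
    x ^ (c * (R - 1) - 1) * (N - x) ^ (-(c * (R - 1) + 3)) * exp (-c * x / (N - x))

lemma integral_invariantDensity {N c R x₁ x₂ : ℝ} (hc : 0 < c) (hR : 1 < R) (hx₁ : 0 < x₁)
    (hx₁₂ : x₁ ≤ x₂) (hx₂ : x₂ < N) :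
    ∫ x in x₁..x₂, invariantDensity N c R x =
      (∫ y in (x₁ / (N - x₁))..(x₂ / (N - x₂)), oddsKernel c (c * (R - 1)) y) /
        ∫ y in Ioi 0, oddsKernel c (c * (R - 1)) y := by
  have hfactor : ∀ x, invariantDensity N c R x =
      (c ^ (-(c * (R - 1))) * (R ^ 2 + c⁻¹ * (R - 1)) * Gamma (c * (R - 1)))⁻¹ *
        (N ^ 3 * x ^ (c * (R - 1) - 1) * (N - x) ^ (-(c * (R - 1) + 3)) *
          exp (-c * x / (N - x))) := fun x => by
    simp only [invariantDensity, mul_assoc]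
  simp only [hfactor, intervalIntegral.integral_const_mul]
  rw [integral_comp_div_sub hx₁ hx₁₂ hx₂, Gamma_mul_eq_integral_oddsKernel hc hR, inv_mul_eq_div]

lemma strictMonoOn_div_sub {N : ℝ} (hN : 0 < N) : StrictMonoOn (fun x => x / (N - x)) (Iio N) :=
  fun x (hx : x < N) x' (hx' : x' < N) hxx' => by
    rw [div_lt_div_iff₀ (by linarith) (by linarith)]
    nlinarith

lemma tendsto_div_sq_mul_nhdsGT_zero {k m : ℝ} (hk : 0 < k) (hm : 0 < m) :
    Tendsto (fun σ : ℝ => k / (σ ^ 2 * m)) (𝓝[>] 0) atTop := by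
  have hsq : Tendsto (fun σ : ℝ => σ ^ 2 * m) (𝓝[>] 0) (𝓝[>] 0) :=
    tendsto_nhdsWithin_of_tendsto_nhds_of_eventually_within _
      ((Continuous.tendsto' (by fun_prop) 0 _ (by simp)).mono_left nhdsWithin_le_nhds)
      (eventually_nhdsWithin_of_forall fun σ (hσ : 0 < σ) => mem_Ioi.mpr (by positivity))
  simpa only [div_eq_mul_inv, Function.comp_def] using
    (tendsto_inv_nhdsGT_zero.comp hsq).const_mul_atTop hk

theorem concentration_of_invariant_density_general
    (N β μ γ : ℝ) (hN : 0 < N) (hμ : 0 < μ) (hγ : 0 < γ)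
    (R0D : ℝ) (hR0D : R0D = β * N / (μ + γ)) (hR : 1 < R0D)
    (Istar : ℝ) (hIstar : Istar = (1 - 1 / R0D) * N)
    (ε : ℝ) (hε : 0 < ε) (hε' : ε < min Istar (N - Istar))
    (R0S c0 C : ℝ → ℝ)
    (hR0S : ∀ σ, R0S σ = β * N / (μ + γ) - σ ^ 2 * N ^ 2 / (2 * (μ + γ)))
    (hc0 : ∀ σ, c0 σ = 2 * (μ + γ) / (σ ^ 2 * N ^ 2))
    (hC : ∀ σ, C σ = (c0 σ ^ (-(c0 σ * (R0S σ - 1))) *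
      ((R0S σ) ^ 2 + (c0 σ)⁻¹ * (R0S σ - 1)) * Real.Gamma (c0 σ * (R0S σ - 1)))⁻¹)
    (p : ℝ → ℝ → ℝ)
    (hp : ∀ σ x, p σ x = C σ * N ^ 3 * x ^ (c0 σ * (R0S σ - 1) - 1) *
      (N - x) ^ (-(c0 σ * (R0S σ - 1) + 3)) * Real.exp (-(c0 σ) * x / (N - x))) :
    Tendsto (fun σ : ℝ => ∫ x in (Istar - ε)..(Istar + ε), p σ x) (𝓝[>] 0) (𝓝 1) := by
  have hμγ : 0 < μ + γ := by positivity
  obtain ⟨hεI, hεN⟩ := lt_min_iff.mp hε'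
  have hθ : Tendsto (fun σ => R0S σ - 1) (𝓝[>] 0) (𝓝 (R0D - 1)) := by
    simp only [hR0S]
    exact (Continuous.tendsto' (by fun_prop) 0 _ (by simp [hR0D])).mono_left nhdsWithin_le_nhds
  have hc : Tendsto c0 (𝓝[>] 0) atTop :=
    (tendsto_div_sq_mul_nhdsGT_zero (by positivity) (by positivity)).congr fun σ => (hc0 σ).symm
  have hodds : Istar / (N - Istar) = R0D - 1 := by
    rw [hIstar]
    field_simp
    ring
  have hmono := strictMonoOn_div_sub hN
  have h₁ := hmono (show Istar - ε < N by linarith) (show Istar < N by linarith) (by linarith)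
  have h₂ := hmono (show Istar < N by linarith) (show Istar + ε < N by linarith) (by linarith)
  simp only [hodds] at h₁ h₂
  refine (tendsto_integral_oddsKernel_window_div hc hθ
    (div_nonneg (by linarith) (by linarith)) h₁ h₂).congr' ?_
  filter_upwards [self_mem_nhdsWithin, hθ.eventually (lt_mem_nhds (by linarith : 0 < R0D - 1))]
    with σ (hσ : 0 < σ) hRσ
  have hpσ : p σ = invariantDensity N (c0 σ) (R0S σ) := funext fun x => by
    rw [hp, hC, invariantDensity]
  rw [hpσ, integral_invariantDensity (by rw [hc0]; positivity) (by linarith) (by linarith)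
    (by linarith) (by linarith)]

/-- concentration of the invariant density as the noise vanishes
(Limit Stochastic Threshold Theorem, endemic case). -/
theorem concentration_of_invariant_density
    (N β μ γ : ℝ) (hN : 0 < N) (hβ : 0 < β) (hμ : 0 < μ) (hγ : 0 < γ)
    (R0D : ℝ) (hR0D : R0D = β * N / (μ + γ)) (hR : 1 < R0D)
    (Istar : ℝ) (hIstar : Istar = (1 - 1 / R0D) * N)
    (ε : ℝ) (hε : 0 < ε) (hε' : ε < min Istar (N - Istar))
    (R0S c0 C : ℝ → ℝ)
    (hR0S : ∀ σ, R0S σ = β * N / (μ + γ) - σ ^ 2 * N ^ 2 / (2 * (μ + γ)))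
    (hc0 : ∀ σ, c0 σ = 2 * (μ + γ) / (σ ^ 2 * N ^ 2))
    (hC : ∀ σ, C σ = (c0 σ ^ (-(c0 σ * (R0S σ - 1))) *
      ((R0S σ) ^ 2 + (c0 σ)⁻¹ * (R0S σ - 1)) * Real.Gamma (c0 σ * (R0S σ - 1)))⁻¹)
    (p : ℝ → ℝ → ℝ)
    (hp : ∀ σ x, p σ x = C σ * N ^ 3 * x ^ (c0 σ * (R0S σ - 1) - 1) *
      (N - x) ^ (-(c0 σ * (R0S σ - 1) + 3)) * Real.exp (-(c0 σ) * x / (N - x))) :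
    Tendsto (fun σ : ℝ => ∫ x in (Istar - ε)..(Istar + ε), p σ x) (𝓝[>] 0) (𝓝 1) :=
  concentration_of_invariant_density_general N β μ γ hN hμ hγ R0D hR0D hR Istar hIstar ε hε hε' R0S
    c0 C hR0S hc0 hC p hp
end

section
/- Second derivative of the log-density at the mode: assume R₀ᴾ > 1 and let h_σ(x) = c₀(R₀ᴾ−1) log x − (c₀(R₀ᴾ−1)+4) log(N−x) − c₀ x/(N−x) for x ∈ (0,N). Then h_σ''(I_*(σ)) = −(N/(I_*(σ)(N − I_*(σ))²)) · √((4 + R₀ᴾc₀)² − 16c₀). Moreover, if N, β, μ, γ > 0 are fixed with R₀ᴰ > 1, then h_σ''(I_*(σ)) → −∞ as σ → 0⁺. -/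
open Real MeasureTheory Filter Set Topology

/-! With `s = R₀ᴾc₀` and `c = c₀` the log-density is
`h_σ = (s - c) log x - (s - c + 4) log (N - x) - c x / (N - x)`, and `h_σ'(x) = 0` on `(0, N)`
reduces to the quadratic `4x² + (s - 4)Nx - (s - c)N² = 0`, whose discriminant is `N² r²` with
`r² = (4 + s)² - 16c`; its root in `(0, N)` is `I_*`. Eliminating `c = ((4 + s)² - r²)/16` from
`h_σ''(I_*)` leaves `-N r / (I_* (N - I_*)²)`.

For the limit: `c < s` (that is, `R₀ᴾ > 1`, which holds near `σ = 0` since `R₀ᴾ → R₀ᴰ > 1`)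
gives `r > |s - 4|`, and `I_* (N - I_*)² ≤ N³`, so `h_σ''(I_*) ≤ -(s - 4)/N²`, while
`s = 2β/(Nσ²) - 2 → ∞` as `σ → 0⁺`. -/

noncomputable def logDensity (A B C N x : ℝ) : ℝ := A * log x - B * log (N - x) - C * x / (N - x)

section Derivatives

variable {A B C N x : ℝ}

theorem hasDerivAt_logDensity (hx : x ≠ 0) (hxN : N - x ≠ 0) :
    HasDerivAt (logDensity A B C N) (A / x + B / (N - x) - C * N / (N - x) ^ 2) x := by
  have hsub : HasDerivAt (fun y : ℝ => N - y) (-1) x := by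
    simpa using (hasDerivAt_id x).const_sub N
  have := (((hasDerivAt_log hx).const_mul A).sub
    (((hasDerivAt_log hxN).comp x hsub).const_mul B)).sub
    (((hasDerivAt_id x).const_mul C).div hsub hxN)
  refine this.congr_deriv ?_
  simp only [id]
  field_simp
  ring

theorem hasDerivAt_deriv_logDensity (hx : x ≠ 0) (hxN : N - x ≠ 0) :
    HasDerivAt (fun y => A / y + B / (N - y) - C * N / (N - y) ^ 2)
      (-(A / x ^ 2) + B / (N - x) ^ 2 - 2 * C * N / (N - x) ^ 3) x := by
  have hsub : HasDerivAt (fun y : ℝ => N - y) (-1) x := by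
    simpa using (hasDerivAt_id x).const_sub N
  have := (((hasDerivAt_const x A).div (hasDerivAt_id x) hx).add
    ((hasDerivAt_const x B).div hsub hxN)).sub
    ((hasDerivAt_const x (C * N)).div (hsub.pow 2) (pow_ne_zero 2 hxN))
  refine this.congr_deriv ?_
  simp only [id, Pi.pow_apply]
  field_simp
  ring

theorem deriv_deriv_logDensity (hx : x ≠ 0) (hxN : x ≠ N) :
    deriv (deriv (logDensity A B C N)) x =
      -(A / x ^ 2) + B / (N - x) ^ 2 - 2 * C * N / (N - x) ^ 3 := by
  have hderiv : deriv (logDensity A B C N) =ᶠ[𝓝 x]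
      fun y => A / y + B / (N - y) - C * N / (N - y) ^ 2 := by
    filter_upwards [eventually_ne_nhds hx, eventually_ne_nhds hxN] with y hy hyN
    exact (hasDerivAt_logDensity hy (sub_ne_zero.2 hyN.symm)).deriv
  rw [hderiv.deriv_eq]
  exact (hasDerivAt_deriv_logDensity hx (sub_ne_zero.2 hxN.symm)).deriv

end Derivatives

section Mode

variable {N s c : ℝ}

noncomputable def logDensityMode (N s c : ℝ) : ℝ := N / 8 * ((4 - s) + √((4 + s) ^ 2 - 16 * c))

theorem abs_sub_four_lt_sqrt_discr (hcs : c < s) :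
    |s - 4| < √((4 + s) ^ 2 - 16 * c) := by
  rw [lt_sqrt (abs_nonneg _), sq_abs]
  nlinarith

theorem sqrt_discr_lt (hc : 0 < c) (hcs : c < s) : √((4 + s) ^ 2 - 16 * c) < 4 + s := by
  rw [sqrt_lt' (by linarith)]
  linarith

theorem logDensityMode_mem_Ioo (hN : 0 < N) (hc : 0 < c) (hcs : c < s) :
    logDensityMode N s c ∈ Ioo 0 N := by
  have hlt := abs_sub_four_lt_sqrt_discr hcs
  have hgt := sqrt_discr_lt hc hcs
  have hpos : 0 < (4 - s) + √((4 + s) ^ 2 - 16 * c) := by linarith [le_abs_self (s - 4)]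
  rw [logDensityMode]
  constructor <;> nlinarith

theorem deriv_deriv_logDensity_mode (hN : 0 < N) (hc : 0 < c) (hcs : c < s) :
    deriv (deriv (logDensity (s - c) (s - c + 4) c N)) (logDensityMode N s c) =
      -(N / (logDensityMode N s c * (N - logDensityMode N s c) ^ 2)) *
        √((4 + s) ^ 2 - 16 * c) := by
  set x := logDensityMode N s c with hx_def
  obtain ⟨hx, hxN⟩ : x ∈ Ioo 0 N := logDensityMode_mem_Ioo hN hc hcs
  rw [deriv_deriv_logDensity hx.ne' hxN.ne]
  set r := √((4 + s) ^ 2 - 16 * c)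
  have hr : r = (8 * x - 4 * N + s * N) / N := by
    rw [hx_def, logDensityMode]
    field_simp
    ring
  have hc_eq : c = ((4 + s) ^ 2 - r ^ 2) / 16 := by
    rw [sq_sqrt (by nlinarith [sq_nonneg (s - 4)])]
    ring
  rw [hc_eq, hr]
  field_simp [hx.ne', (sub_pos.2 hxN).ne']
  ring

theorem deriv_deriv_logDensity_mode_le (hN : 0 < N) (hc : 0 < c) (hcs : c < s) :
    deriv (deriv (logDensity (s - c) (s - c + 4) c N)) (logDensityMode N s c) ≤
      -((s - 4) / N ^ 2) := by
  rw [deriv_deriv_logDensity_mode hN hc hcs]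
  set x := logDensityMode N s c
  set r := √((4 + s) ^ 2 - 16 * c)
  obtain ⟨hx, hxN⟩ : x ∈ Ioo 0 N := logDensityMode_mem_Ioo hN hc hcs
  have hr : s - 4 < r := (le_abs_self _).trans_lt (abs_sub_four_lt_sqrt_discr hcs)
  have hden : 0 < x * (N - x) ^ 2 := mul_pos hx (pow_pos (sub_pos.2 hxN) 2)
  have hK : 1 / N ^ 2 ≤ N / (x * (N - x) ^ 2) := by
    rw [div_le_div_iff₀ (by positivity) hden]
    have : (N - x) ^ 2 ≤ N ^ 2 := pow_le_pow_left₀ (by linarith) (by linarith) 2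
    nlinarith
  calc -(N / (x * (N - x) ^ 2)) * r ≤ -(1 / N ^ 2 * r) := by
        nlinarith [sqrt_nonneg ((4 + s) ^ 2 - 16 * c)]
    _ ≤ -((s - 4) / N ^ 2) := by
        rw [one_div_mul_eq_div, neg_le_neg_iff]
        gcongr

end Mode

theorem tendsto_mul_inv_sq_nhdsGT_zero {a : ℝ} (ha : 0 < a) :
    Tendsto (fun σ : ℝ => a * σ⁻¹ ^ 2) (𝓝[>] 0) atTop :=
  ((tendsto_pow_atTop two_ne_zero).comp tendsto_inv_nhdsGT_zero).const_mul_atTop ha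

/-- second derivative of the log-density at the mode, and its blow-up to `-∞`
as the noise vanishes. -/
theorem second_derivative_of_log_density_at_mode
    (N β μ γ : ℝ) (hN : 0 < N) (hβ : 0 < β) (hμ : 0 < μ) (hγ : 0 < γ)
    (R0D : ℝ) (hR0D : R0D = β * N / (μ + γ))
    (R0P c0 Istar : ℝ → ℝ)
    (hR0P : ∀ σ, R0P σ = (β * N - σ ^ 2 * N ^ 2) / (μ + γ))
    (hc0 : ∀ σ, c0 σ = 2 * (μ + γ) / (σ ^ 2 * N ^ 2))
    (hIstar : ∀ σ, Istar σ = N / 8 *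
      ((4 - R0P σ * c0 σ) + Real.sqrt ((4 + R0P σ * c0 σ) ^ 2 - 16 * c0 σ)))
    (h : ℝ → ℝ → ℝ)
    (hh : ∀ σ x, h σ x = c0 σ * (R0P σ - 1) * Real.log x -
      (c0 σ * (R0P σ - 1) + 4) * Real.log (N - x) - c0 σ * x / (N - x)) :
    (∀ σ > (0:ℝ), 1 < R0P σ →
      deriv (deriv (h σ)) (Istar σ) =
        -(N / (Istar σ * (N - Istar σ) ^ 2)) *
          Real.sqrt ((4 + R0P σ * c0 σ) ^ 2 - 16 * c0 σ)) ∧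
    (1 < R0D → Tendsto (fun σ : ℝ => deriv (deriv (h σ)) (Istar σ)) (𝓝[>] 0) atBot) := by
  have hh_eq : ∀ σ, h σ =
      logDensity (R0P σ * c0 σ - c0 σ) (R0P σ * c0 σ - c0 σ + 4) (c0 σ) N := fun σ =>
    funext fun x => by rw [hh, logDensity]; ring
  have hc0_lt : ∀ σ > (0 : ℝ), 1 < R0P σ → 0 < c0 σ ∧ c0 σ < R0P σ * c0 σ := fun σ hσ hR => by
    have : 0 < c0 σ := by rw [hc0]; positivity
    exact ⟨this, lt_mul_of_one_lt_left this hR⟩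
  refine ⟨fun σ hσ hR => ?_, fun hRD => ?_⟩
  · obtain ⟨hc, hcs⟩ := hc0_lt σ hσ hR
    rw [hh_eq, hIstar]
    exact deriv_deriv_logDensity_mode hN hc hcs
  have hR0P_gt : ∀ᶠ σ in 𝓝[>] (0 : ℝ), 1 < R0P σ := by
    have : Tendsto R0P (𝓝 0) (𝓝 R0D) := by
      rw [funext hR0P, hR0D]
      have hcont : Continuous fun σ : ℝ => (β * N - σ ^ 2 * N ^ 2) / (μ + γ) := by fun_prop
      simpa using hcont.tendsto 0
    exact nhdsWithin_le_nhds (this.eventually_const_lt hRD)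
  have hs : Tendsto (fun σ => R0P σ * c0 σ) (𝓝[>] 0) atTop := by
    refine (tendsto_atTop_add_const_right _ (-2)
      (tendsto_mul_inv_sq_nhdsGT_zero (by positivity : 0 < 2 * β / N))).congr' ?_
    filter_upwards [self_mem_nhdsWithin] with σ hσ
    rw [hR0P, hc0]
    field_simp [(mem_Ioi.1 hσ).ne']
    ring
  refine tendsto_atBot_mono' _ ?_ (tendsto_neg_atTop_atBot.comp
    ((tendsto_atTop_add_const_right _ (-4) hs).atTop_div_const (pow_pos hN 2)))
  filter_upwards [self_mem_nhdsWithin, hR0P_gt] with σ hσ hR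
  obtain ⟨hc, hcs⟩ := hc0_lt σ hσ hR
  rw [hh_eq, hIstar]
  exact deriv_deriv_logDensity_mode_le hN hc hcs
end

section
/- Divergence of the scale function at +∞ and the dichotomy at −∞: the scale function ψ(x) = ∫₀^x φ(ξ) dξ satisfies ψ(x) → +∞ as x → +∞; moreover, if R₀ˢ < 1 then φ is integrable on (−∞, 0] (so ψ has a finite limit as x → −∞), while if R₀ˢ ≥ 1 then ∫_{−∞}^0 φ(ξ) dξ = +∞ (so ψ(x) → −∞ as x → −∞). -/
open Real MeasureTheory Filter Set Topology

/-!
With `a = c₀ (1 - R₀ˢ)` the density is `φ = exp ∘ g` for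
`g ξ = a ξ + c₀ (exp ξ - 1) - 2 log ((exp ξ + 1) / 2)`. For `ξ ≥ 0` the logarithm is at most `ξ`,
so the term `c₀ exp ξ` drives `g` to `+∞`; hence `φ ≥ 1` eventually and `ψ` grows at least
linearly. For `ξ ≤ 0` the last two terms of `g` lie between `-c₀` and `2 log 2`, so `φ` is
comparable to `exp (a ξ)`: integrable on `(-∞, 0]` when `a > 0`, and at least `exp (-c₀)` when
`a ≤ 0`.
-/

theorem tendsto_intervalIntegral_atTop_of_eventually_const_le {f : ℝ → ℝ} {ε : ℝ}
    (hf : ∀ u v, IntervalIntegrable f volume u v) (hε : 0 < ε) (h : ∀ᶠ x in atTop, ε ≤ f x)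
    (b : ℝ) : Tendsto (fun x => ∫ t in b..x, f t) atTop atTop := by
  obtain ⟨M, hM⟩ := eventually_atTop.1 h
  have hlinear : Tendsto (fun x => (∫ t in b..M, f t) + ε * (x - M)) atTop atTop :=
    tendsto_atTop_add_const_left _ _
      ((tendsto_atTop_add_const_right _ (-M) tendsto_id).const_mul_atTop hε)
  refine tendsto_atTop_mono' atTop ?_ hlinear
  filter_upwards [eventually_ge_atTop M] with x hx
  rw [← intervalIntegral.integral_add_adjacent_intervals (hf b M) (hf M x)]
  gcongr
  calc ε * (x - M) = ∫ _ in M..x, ε := by simp [mul_comm]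
    _ ≤ ∫ t in M..x, f t :=
      intervalIntegral.integral_mono_on hx intervalIntegrable_const (hf M x) fun t ht => hM t ht.1

theorem lintegral_Iic_ofReal_eq_top_of_forall_const_le {f : ℝ → ℝ} {ε b : ℝ} (hε : 0 < ε)
    (h : ∀ x ≤ b, ε ≤ f x) : ∫⁻ x in Iic b, ENNReal.ofReal (f x) = ⊤ := by
  refine top_le_iff.1 ?_
  calc ⊤ = ∫⁻ _ in Iic b, ENNReal.ofReal ε := by
        rw [setLIntegral_const, Real.volume_Iic, ENNReal.mul_top (ENNReal.ofReal_pos.2 hε).ne']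
    _ ≤ ∫⁻ x in Iic b, ENNReal.ofReal (f x) :=
      setLIntegral_mono' measurableSet_Iic fun x hx => ENNReal.ofReal_le_ofReal (h x hx)

section LogHalfExpAddOne

variable {ξ : ℝ}

theorem log_half_exp_add_one_le_of_nonneg (hξ : 0 ≤ ξ) : log ((exp ξ + 1) / 2) ≤ ξ := by
  calc log ((exp ξ + 1) / 2) ≤ log (exp ξ) := by
        gcongr
        linarith [one_le_exp hξ]
    _ = ξ := log_exp ξ

theorem log_half_exp_add_one_nonpos_of_nonpos (hξ : ξ ≤ 0) : log ((exp ξ + 1) / 2) ≤ 0 :=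
  log_nonpos (by positivity) (by linarith [exp_le_one_iff.2 hξ])

theorem neg_log_two_le_log_half_exp_add_one (ξ : ℝ) : -log 2 ≤ log ((exp ξ + 1) / 2) := by
  calc -log 2 = log (1 / 2) := by rw [one_div, log_inv]
    _ ≤ log ((exp ξ + 1) / 2) := by
      gcongr
      linarith [exp_pos ξ]

end LogHalfExpAddOne

noncomputable def scaleExponent (a c ξ : ℝ) : ℝ :=
  a * ξ + c * (exp ξ - 1) - 2 * log ((exp ξ + 1) / 2)

section ScaleExponent

variable {a c : ℝ}

theorem continuous_scaleExponent (a c : ℝ) : Continuous (scaleExponent a c) := by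
  unfold scaleExponent
  exact Continuous.sub (by fun_prop) <|
    continuous_const.mul <| (by fun_prop : Continuous _).log fun ξ => by positivity

theorem tendsto_scaleExponent_atTop (a : ℝ) (hc : 0 < c) :
    Tendsto (scaleExponent a c) atTop atTop := by
  have hquadratic : Tendsto (fun ξ : ℝ => ξ * (c / 2 * ξ + (a + c - 2))) atTop atTop :=
    tendsto_id.atTop_mul_atTop₀ <|
      tendsto_atTop_add_const_right _ _ (tendsto_id.const_mul_atTop (by positivity))
  refine tendsto_atTop_mono' atTop ?_ hquadratic
  filter_upwards [eventually_ge_atTop 0] with ξ hξ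
  have hexp := mul_le_mul_of_nonneg_left (quadratic_le_exp_of_nonneg hξ) hc.le
  have hlog := log_half_exp_add_one_le_of_nonneg hξ
  unfold scaleExponent
  linarith

theorem scaleExponent_le_of_nonpos (hc : 0 ≤ c) {ξ : ℝ} (hξ : ξ ≤ 0) :
    scaleExponent a c ξ ≤ a * ξ + log 4 := by
  have hexp : c * (exp ξ - 1) ≤ 0 :=
    mul_nonpos_of_nonneg_of_nonpos hc (by linarith [exp_le_one_iff.2 hξ])
  have hlog4 : log 4 = 2 * log 2 := by
    rw [show (4 : ℝ) = 2 ^ 2 by norm_num, log_pow]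
    norm_num
  unfold scaleExponent
  linarith [neg_log_two_le_log_half_exp_add_one ξ]

theorem neg_le_scaleExponent_of_nonpos (ha : a ≤ 0) (hc : 0 ≤ c) {ξ : ℝ} (hξ : ξ ≤ 0) :
    -c ≤ scaleExponent a c ξ := by
  have hlinear : 0 ≤ a * ξ := mul_nonneg_of_nonpos_of_nonpos ha hξ
  have hexp : -c ≤ c * (exp ξ - 1) := by linarith [mul_nonneg hc (exp_pos ξ).le]
  unfold scaleExponent
  linarith [log_half_exp_add_one_nonpos_of_nonpos hξ]

theorem tendsto_integral_exp_scaleExponent_atTop (a : ℝ) (hc : 0 < c) :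
    Tendsto (fun x => ∫ t in (0 : ℝ)..x, exp (scaleExponent a c t)) atTop atTop :=
  tendsto_intervalIntegral_atTop_of_eventually_const_le
    ((continuous_exp.comp (continuous_scaleExponent a c)).intervalIntegrable) one_pos
    (((tendsto_scaleExponent_atTop a hc).eventually_ge_atTop 0).mono fun _ => one_le_exp) 0

theorem integrableOn_Iic_exp_scaleExponent (ha : 0 < a) (hc : 0 ≤ c) :
    IntegrableOn (fun ξ => exp (scaleExponent a c ξ)) (Iic 0) := by
  refine ((integrableOn_exp_mul_Iic ha 0).const_mul 4).mono'
    (continuous_exp.comp (continuous_scaleExponent a c)).aestronglyMeasurable.restrict ?_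
  filter_upwards [ae_restrict_mem measurableSet_Iic] with ξ (hξ : ξ ≤ 0)
  rw [norm_of_nonneg (exp_pos _).le, mul_comm, ← exp_log (four_pos : (0 : ℝ) < 4), ← exp_add]
  exact exp_le_exp.2 (scaleExponent_le_of_nonpos hc hξ)

theorem lintegral_Iic_exp_scaleExponent_eq_top (ha : a ≤ 0) (hc : 0 ≤ c) :
    ∫⁻ ξ in Iic (0 : ℝ), ENNReal.ofReal (exp (scaleExponent a c ξ)) = ⊤ :=
  lintegral_Iic_ofReal_eq_top_of_forall_const_le (exp_pos (-c)) fun _ hξ =>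
    exp_le_exp.2 (neg_le_scaleExponent_of_nonpos ha hc hξ)

end ScaleExponent

theorem scale_function_dichotomy_general
    (N β μ γ σ : ℝ) (hN : 0 < N) (hμ : 0 < μ) (hγ : 0 < γ) (hσ : 0 < σ)
    (R0S c0 : ℝ)
    (hR0S : R0S = β * N / (μ + γ) - σ ^ 2 * N ^ 2 / (2 * (μ + γ)))
    (hc0 : c0 = 2 * (μ + γ) / (σ ^ 2 * N ^ 2))
    (φ : ℝ → ℝ)
    (hφ : ∀ ξ, φ ξ = Real.exp (-(2 / (σ ^ 2 * N ^ 2)) * (β * N - μ - γ - σ ^ 2 * N ^ 2 / 2) * ξ +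
      c0 * (Real.exp ξ - 1) - 2 * Real.log ((Real.exp ξ + 1) / 2))) :
    Tendsto (fun x : ℝ => ∫ t in (0:ℝ)..x, φ t) atTop atTop ∧
    (R0S < 1 → IntegrableOn φ (Set.Iic 0)) ∧
    (1 ≤ R0S → ∫⁻ ξ in Set.Iic (0:ℝ), ENNReal.ofReal (φ ξ) = ⊤) := by
  have hc0_pos : 0 < c0 := by
    rw [hc0]
    have : 0 < μ + γ := add_pos hμ hγ
    positivity
  have hφ_eq : φ = fun ξ => exp (scaleExponent (c0 * (1 - R0S)) c0 ξ) := by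
    funext ξ
    rw [hφ, scaleExponent, hc0, hR0S]
    congr 3
    field_simp
    ring
  subst hφ_eq
  refine ⟨tendsto_integral_exp_scaleExponent_atTop _ hc0_pos, fun hR => ?_, fun hR => ?_⟩
  · exact integrableOn_Iic_exp_scaleExponent (mul_pos hc0_pos (by linarith)) hc0_pos.le
  · exact lintegral_Iic_exp_scaleExponent_eq_top
      (mul_nonpos_of_nonneg_of_nonpos hc0_pos.le (by linarith)) hc0_pos.le

/-- divergence of the scale function at `+∞` and the dichotomy at `-∞`. -/
theorem scale_function_dichotomy
    (N β μ γ σ : ℝ) (hN : 0 < N) (hβ : 0 < β) (hμ : 0 < μ) (hγ : 0 < γ) (hσ : 0 < σ)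
    (R0S c0 : ℝ)
    (hR0S : R0S = β * N / (μ + γ) - σ ^ 2 * N ^ 2 / (2 * (μ + γ)))
    (hc0 : c0 = 2 * (μ + γ) / (σ ^ 2 * N ^ 2))
    (φ : ℝ → ℝ)
    (hφ : ∀ ξ, φ ξ = Real.exp (-(2 / (σ ^ 2 * N ^ 2)) * (β * N - μ - γ - σ ^ 2 * N ^ 2 / 2) * ξ +
      c0 * (Real.exp ξ - 1) - 2 * Real.log ((Real.exp ξ + 1) / 2))) :
    Tendsto (fun x : ℝ => ∫ t in (0:ℝ)..x, φ t) atTop atTop ∧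
    (R0S < 1 → IntegrableOn φ (Set.Iic 0)) ∧
    (1 ≤ R0S → ∫⁻ ξ in Set.Iic (0:ℝ), ENNReal.ofReal (φ ξ) = ⊤) :=
  scale_function_dichotomy_general N β μ γ σ hN hμ hγ hσ R0S c0 hR0S hc0 φ hφ
end
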